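/- arXiv:2511.08538 — 7 statements merged into one kernel-verified Lean document; each statement's English description precedes it below -/
import Mathlib

section
/- Let E be a finite ground set, f a polymatroid rank function on E, and let E be partitioned into nonempty blocks E_1, …, E_m with associated reals v_1 > v_2 > … > v_m > 0. For 1 ≤ j ≤ m write P_{<j} = E_1 ∪ … ∪ E_{j−1} (so P_{<1} = ∅), and define the set function g(S) = Σ_{j=1}^m v_j · ( f(P_{<j} ∪ (S ∩ E_j)) − f(P_{<j}) ) for S ⊆ E. Then g(∅) = 0, g is monotone (g(A) ≤ g(B) whenever A ⊆ B ⊆ E), and g is submodular (g(A) + g(B) ≥ g(A ∪ B) + g(A ∩ B) for all A, B ⊆ E); that is, g is itself a polymatroid rank function on E. -/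
/-- If `f` is a polymatroid rank function on a finite ground set `E`,
`E` is partitioned into nonempty blocks `blocks 1, …, blocks m` with associated
strictly decreasing positive reals `v`, `P j` denotes the union of the blocks before `j`,
and `g S = ∑ j, v j * (f (P j ∪ (S ∩ blocks j)) - f (P j))`, then `g` is itself a
polymatroid rank function on `E`. -/
theorem stmt_0 {E : Type*} [Fintype E] [DecidableEq E]
    (f : Finset E → ℝ)
    (hf0 : f ∅ = 0)
    (hfmono : ∀ A B : Finset E, A ⊆ B → f A ≤ f B)
    (hfsub : ∀ A B : Finset E, f (A ∪ B) + f (A ∩ B) ≤ f A + f B)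
    (m : ℕ) (blocks : Fin m → Finset E)
    (hne : ∀ j, (blocks j).Nonempty)
    (hdisj : ∀ j j' : Fin m, j ≠ j' → Disjoint (blocks j) (blocks j'))
    (hcover : Finset.univ.biUnion blocks = (Finset.univ : Finset E))
    (v : Fin m → ℝ) (hvanti : StrictAnti v) (hvpos : ∀ j, 0 < v j)
    (P : Fin m → Finset E)
    (hP : ∀ j, P j = (Finset.univ.filter (fun j' => j' < j)).biUnion blocks)
    (g : Finset E → ℝ)
    (hg : ∀ S, g S = ∑ j, v j * (f (P j ∪ (S ∩ blocks j)) - f (P j))) :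
    g ∅ = 0 ∧ (∀ A B : Finset E, A ⊆ B → g A ≤ g B) ∧
      (∀ A B : Finset E, g (A ∪ B) + g (A ∩ B) ≤ g A + g B) := by
  refine ⟨?_, ?_, ?_⟩
  · rw [hg]
    apply Finset.sum_eq_zero
    intro j _
    simp
  · intro A B hAB
    rw [hg, hg]
    apply Finset.sum_le_sum
    intro j _
    apply mul_le_mul_of_nonneg_left _ (hvpos j).le
    have : P j ∪ A ∩ blocks j ⊆ P j ∪ B ∩ blocks j :=
      Finset.union_subset_union_right (Finset.inter_subset_inter_right hAB)
    linarith [hfmono _ _ this]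
  · intro A B
    rw [hg, hg, hg, hg, ← Finset.sum_add_distrib, ← Finset.sum_add_distrib]
    apply Finset.sum_le_sum
    intro j _
    rw [← mul_add, ← mul_add]
    apply mul_le_mul_of_nonneg_left _ (hvpos j).le
    have key := hfsub (P j ∪ A ∩ blocks j) (P j ∪ B ∩ blocks j)
    have h1 : (P j ∪ A ∩ blocks j) ∪ (P j ∪ B ∩ blocks j)
        = P j ∪ (A ∪ B) ∩ blocks j := by
      rw [Finset.union_inter_distrib_right]
      ext x; simp [Finset.mem_union]; tauto
    have h2 : (P j ∪ A ∩ blocks j) ∩ (P j ∪ B ∩ blocks j)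
        = P j ∪ (A ∩ B) ∩ blocks j := by
      ext x; simp [Finset.mem_union, Finset.mem_inter]; tauto
    rw [h1, h2] at key
    linarith
end

section
/- Let E be a finite ground set, f a polymatroid rank function on E, and let E be partitioned into nonempty blocks E_1, …, E_m with associated reals v_1 > v_2 > … > v_m > 0. Let w ∈ ℝ^E be the weight vector with w_i = v_j for i ∈ E_j, and let X* be the set of points x ∈ P(f) maximizing Σ_{i∈E} w_i x_i over P(f). For 1 ≤ j ≤ m write P_{<j} = E_1 ∪ … ∪ E_{j−1}. Then for every S ⊆ E, the maximum over x ∈ X* of Σ_{i∈S} w_i x_i equals Σ_{j=1}^m v_j · ( f(P_{<j} ∪ (S ∩ E_j)) − f(P_{<j}) ). -/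
/-- The independence polytope of a set function on a finite ground set. -/
def indepP {E : Type*} [Fintype E] (f : Finset E → ℝ) : Set (E → ℝ) :=
  {x | (∀ i, 0 ≤ x i) ∧ ∀ S : Finset E, ∑ i ∈ S, x i ≤ f S}

/-!
Order `E` so that the blocks come one after another and, inside each block, the elements
of `S` come first. The greedy vector `x_i = f(elements up to i) - f(elements before i)` lies
in `P(f)` by submodularity and is tight on every initial segment of the order, in particular
on every `P_j` and every `P_j ∪ (S ∩ E_j)`. Abel summation writes `∑ w_i y_i` as
`∑_j (v_j - v_{j+1}) y(P_{j+1})` (with `v_{m+1} = 0`), a positive combination of prefix sums,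
each bounded by `f(P_{j+1})`. Hence `x` is optimal, and every optimal `z` is tight on all
`P_j`, so `z(S ∩ E_j) = z(P_j ∪ (S ∩ E_j)) - z(P_j) ≤ f(P_j ∪ (S ∩ E_j)) - f(P_j)`, with
equality for `z = x`.
-/

open Finset

section Greedy

variable {E α : Type*} [Fintype E] [LinearOrder α]

noncomputable def greedyVec (f : Finset E → ℝ) (key : E → α) (i : E) : ℝ :=
  f {j | key j ≤ key i} - f {j | key j < key i}

variable {f : Finset E → ℝ} {key : E → α}

lemma greedyVec_nonneg (hf : Monotone f) (i : E) : 0 ≤ greedyVec f key i :=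
  sub_nonneg.2 <| hf <| monotone_filter_right _ fun _ _ => le_of_lt

lemma eq_filter_key_lt_of_insert [DecidableEq E] (hkey : Function.Injective key) {a : E}
    {s : Finset E} (ha : a ∉ s) (hmax : ∀ j ∈ s, key j ≤ key a)
    (hs : ∀ i ∈ insert a s, ∀ j, key j ≤ key i → j ∈ insert a s) :
    s = ({j | key j < key a} : Finset E) := by
  ext j
  simp only [mem_filter, mem_univ, true_and]
  refine ⟨fun hj => (hmax j hj).lt_of_ne fun h => ha (hkey h ▸ hj), fun hj => ?_⟩
  exact (mem_insert.1 (hs a (mem_insert_self a s) j hj.le)).resolve_left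
    (by rintro rfl; exact hj.false)

lemma sum_greedyVec_of_isLowerSet [DecidableEq E] (hf0 : f ∅ = 0)
    (hkey : Function.Injective key) (s : Finset E)
    (hs : ∀ i ∈ s, ∀ j, key j ≤ key i → j ∈ s) :
    ∑ i ∈ s, greedyVec f key i = f s := by
  induction s using Finset.induction_on_max_value key with
  | empty => simp [hf0]
  | insert a s ha hmax ih =>
    have hs' := eq_filter_key_lt_of_insert hkey ha hmax hs
    have hins : insert a s = ({j | key j ≤ key a} : Finset E) := by
      ext j; rw [hs']; simp [le_iff_lt_or_eq, hkey.eq_iff, or_comm]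
    have ih' : ∑ i ∈ s, greedyVec f key i = f s := ih <| by
      rw [hs']
      simp only [mem_filter, mem_univ, true_and]
      exact fun i hi j hj => hj.trans_lt hi
    rw [sum_insert ha, ih', hins, greedyVec, hs']
    ring

lemma sum_greedyVec_le [DecidableEq E] (hf0 : f ∅ = 0)
    (hfsub : ∀ A B : Finset E, f (A ∪ B) + f (A ∩ B) ≤ f A + f B)
    (hkey : Function.Injective key) (s : Finset E) :
    ∑ i ∈ s, greedyVec f key i ≤ f s := by
  induction s using Finset.induction_on_max_value key with
  | empty => simp [hf0]
  | insert a s ha hmax ih =>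
    have hlt : ∀ j ∈ s, key j < key a := fun j hj =>
      (hmax j hj).lt_of_ne fun h => ha (hkey h ▸ hj)
    have hunion : insert a s ∪ ({j | key j < key a} : Finset E) =
        ({j | key j ≤ key a} : Finset E) := by
      ext j
      simp only [mem_union, mem_insert, mem_filter, mem_univ, true_and]
      constructor
      · rintro ((rfl | hj) | hj)
        exacts [le_rfl, (hlt j hj).le, hj.le]
      · intro hj
        rcases hj.lt_or_eq with hj | hj
        exacts [Or.inr hj, Or.inl (Or.inl (hkey hj))]
    have hinter : insert a s ∩ ({j | key j < key a} : Finset E) = s := by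
      ext j
      simp only [mem_inter, mem_insert, mem_filter, mem_univ, true_and]
      constructor
      · rintro ⟨rfl | hj, hlt'⟩
        exacts [absurd hlt' (lt_irrefl _), hj]
      · exact fun hj => ⟨Or.inr hj, hlt j hj⟩
    have := hfsub (insert a s) {j | key j < key a}
    rw [hunion, hinter] at this
    rw [sum_insert ha, greedyVec]
    linarith

theorem exists_mem_indepP_sum_sublevel_eq [DecidableEq E] (hf0 : f ∅ = 0)
    (hfmono : Monotone f) (hfsub : ∀ A B : Finset E, f (A ∪ B) + f (A ∩ B) ≤ f A + f B)
    (r : E → α) :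
    ∃ x ∈ indepP f, ∀ t, ∑ i ∈ ({i | r i < t} : Finset E), x i = f {i | r i < t} := by
  let key : E → α ×ₗ Fin (Fintype.card E) := fun i => toLex (r i, Fintype.equivFin E i)
  have hkey : Function.Injective key := fun i j h =>
    (Fintype.equivFin E).injective (congrArg Prod.snd (toLex.injective h))
  refine ⟨greedyVec f key, ⟨greedyVec_nonneg hfmono, sum_greedyVec_le hf0 hfsub hkey⟩,
    fun t => sum_greedyVec_of_isLowerSet hf0 hkey _ ?_⟩
  simp only [mem_filter, mem_univ, true_and]
  exact fun i hi j hj => (Prod.Lex.monotone_fst _ _ hj).trans_lt hi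

end Greedy

section LayerCake

variable {ι R : Type*} [Fintype ι]

def extendByZero [Zero R] {m : ℕ} (v : Fin m → R) (k : ℕ) : R :=
  if h : k < m then v ⟨k, h⟩ else 0

@[simp]
lemma extendByZero_val [Zero R] {m : ℕ} (v : Fin m → R) (j : Fin m) :
    extendByZero v j = v j := by
  simp [extendByZero]

@[simp]
lemma extendByZero_self [Zero R] {m : ℕ} (v : Fin m → R) : extendByZero v m = 0 := by
  simp [extendByZero]

lemma sum_mul_eq_sum_range_sub_mul [CommRing R] {m : ℕ} (V : ℕ → R) (hVm : V m = 0)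
    (b : ι → ℕ) (hb : ∀ i, b i < m) (y : ι → R) :
    ∑ i, V (b i) * y i =
      ∑ k ∈ range m, (V k - V (k + 1)) * ∑ i ∈ {i | b i < k + 1}, y i := by
  have hV : ∀ i, V (b i) = ∑ k ∈ range m, if b i < k + 1 then V k - V (k + 1) else 0 := by
    intro i
    have hIco : {k ∈ range m | b i < k + 1} = Ico (b i) m := by
      ext k; simp only [mem_filter, mem_range, mem_Ico]; omega
    rw [← sum_filter, hIco]
    simp_rw [← neg_sub_neg (V _)]
    rw [sum_Ico_sub (fun k => -V k) (hb i).le, hVm]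
    ring
  simp_rw [hV, sum_mul, mul_sum, ite_mul, zero_mul]
  rw [sum_comm]
  simp_rw [sum_filter]

variable [CommRing R] [LinearOrder R] [IsStrictOrderedRing R] {m : ℕ} {v : Fin m → R}

lemma extendByZero_sub_succ_nonneg (hv : Antitone v) (hv0 : ∀ j, 0 ≤ v j) {k : ℕ}
    (hk : k < m) : 0 ≤ extendByZero v k - extendByZero v (k + 1) := by
  rw [extendByZero, extendByZero, dif_pos hk, sub_nonneg]
  split_ifs with hk'
  · exact hv (Fin.mk_le_mk.2 k.le_succ)
  · exact hv0 _

lemma extendByZero_sub_succ_pos (hv : StrictAnti v) (hv0 : ∀ j, 0 < v j) {k : ℕ} (hk : k < m) :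
    0 < extendByZero v k - extendByZero v (k + 1) := by
  rw [extendByZero, extendByZero, dif_pos hk, sub_pos]
  split_ifs with hk'
  · exact hv (Fin.mk_lt_mk.2 k.lt_succ_self)
  · exact hv0 _

lemma sum_mul_le_sum_mul_of_sublevel_le (hv : Antitone v) (hv0 : ∀ j, 0 ≤ v j)
    (b : ι → Fin m) {x y : ι → R}
    (hxy : ∀ k, ∑ i ∈ {i | (b i : ℕ) < k}, y i ≤ ∑ i ∈ {i | (b i : ℕ) < k}, x i) :
    ∑ i, v (b i) * y i ≤ ∑ i, v (b i) * x i := by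
  simp only [← extendByZero_val v]
  rw [sum_mul_eq_sum_range_sub_mul _ (extendByZero_self v) _ (fun i => (b i).isLt),
    sum_mul_eq_sum_range_sub_mul _ (extendByZero_self v) _ (fun i => (b i).isLt)]
  exact sum_le_sum fun k hk =>
    mul_le_mul_of_nonneg_left (hxy _) (extendByZero_sub_succ_nonneg hv hv0 (mem_range.1 hk))

lemma sum_sublevel_eq_of_sum_mul_le (hv : StrictAnti v) (hv0 : ∀ j, 0 < v j)
    (b : ι → Fin m) {x y : ι → R}
    (hxy : ∀ k, ∑ i ∈ {i | (b i : ℕ) < k}, y i ≤ ∑ i ∈ {i | (b i : ℕ) < k}, x i)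
    (hle : ∑ i, v (b i) * x i ≤ ∑ i, v (b i) * y i) :
    ∀ k ≤ m, ∑ i ∈ {i | (b i : ℕ) < k}, y i = ∑ i ∈ {i | (b i : ℕ) < k}, x i := by
  simp only [← extendByZero_val v] at hle
  rw [sum_mul_eq_sum_range_sub_mul _ (extendByZero_self v) _ (fun i => (b i).isLt),
    sum_mul_eq_sum_range_sub_mul _ (extendByZero_self v) _ (fun i => (b i).isLt),
    ← sub_nonpos, ← sum_sub_distrib] at hle
  simp_rw [← mul_sub] at hle
  have hnonneg : ∀ k ∈ range m, 0 ≤ (extendByZero v k - extendByZero v (k + 1)) *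
      (∑ i ∈ {i | (b i : ℕ) < k + 1}, x i - ∑ i ∈ {i | (b i : ℕ) < k + 1}, y i) :=
    fun k hk => mul_nonneg (extendByZero_sub_succ_pos hv hv0 (mem_range.1 hk)).le
      (sub_nonneg.2 (hxy (k + 1)))
  have hterm := (sum_eq_zero_iff_of_nonneg hnonneg).1 (hle.antisymm (sum_nonneg hnonneg))
  rintro (_ | k) hk
  · simp
  · have := hterm k (mem_range.2 hk)
    exact (sub_eq_zero.1 ((mul_eq_zero.1 this).resolve_left
      (extendByZero_sub_succ_pos hv hv0 hk).ne')).symm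

end LayerCake

section Blocks

variable {E : Type*} [Fintype E]

def maximizers (f : Finset E → ℝ) (w : E → ℝ) : Set (E → ℝ) :=
  {x ∈ indepP f | ∀ y ∈ indepP f, ∑ i, w i * y i ≤ ∑ i, w i * x i}

lemma exists_blockIndex [DecidableEq E] {m : ℕ} {blocks : Fin m → Finset E}
    (hdisj : ∀ j j' : Fin m, j ≠ j' → Disjoint (blocks j) (blocks j'))
    (hcover : univ.biUnion blocks = univ) :
    ∃ b : E → Fin m, ∀ i j, i ∈ blocks j ↔ b i = j := by
  have hmem : ∀ i, ∃ j, i ∈ blocks j := fun i => by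
    simpa using hcover.ge (mem_univ i)
  choose b hb using hmem
  refine ⟨b, fun i j => ⟨fun hi => ?_, fun h => h ▸ hb i⟩⟩
  by_contra hne
  exact disjoint_left.1 (hdisj _ _ hne) (hb i) hi

variable {f : Finset E → ℝ} {m : ℕ} {b : E → Fin m} {v : Fin m → ℝ} {x : E → ℝ}

lemma mem_maximizers_of_sum_sublevel_eq (hv : Antitone v) (hv0 : ∀ j, 0 ≤ v j)
    (hx : x ∈ indepP f)
    (hxb : ∀ k, ∑ i ∈ {i | (b i : ℕ) < k}, x i = f {i | (b i : ℕ) < k}) :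
    x ∈ maximizers f (fun i => v (b i)) :=
  ⟨hx, fun _ hy => sum_mul_le_sum_mul_of_sublevel_le hv hv0 b fun k => (hxb k).symm ▸ hy.2 _⟩

lemma sum_sublevel_eq_of_mem_maximizers (hv : StrictAnti v) (hv0 : ∀ j, 0 < v j)
    (hx : x ∈ indepP f)
    (hxb : ∀ k, ∑ i ∈ {i | (b i : ℕ) < k}, x i = f {i | (b i : ℕ) < k})
    {z : E → ℝ} (hz : z ∈ maximizers f (fun i => v (b i))) (j : Fin m) :
    ∑ i ∈ {i | b i < j}, z i = f {i | b i < j} := by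
  have hfin : univ.filter (b · < j) = univ.filter (fun i => (b i : ℕ) < j) := by
    ext i; simp only [mem_filter, mem_univ, true_and, Fin.lt_def]
  rw [hfin, ← hxb]
  exact sum_sublevel_eq_of_sum_mul_le hv hv0 b (fun k => (hxb k).symm ▸ hz.1.2 _) (hz.2 x hx)
    j j.isLt.le

lemma sum_mul_comp_eq_sum_mul_sub [DecidableEq E] {R : Type*} [CommRing R] (v : Fin m → R)
    (b : E → Fin m) (S : Finset E) (y : E → R) :
    ∑ i ∈ S, v (b i) * y i = ∑ j, v j *
      (∑ i ∈ univ.filter (b · < j) ∪ S ∩ univ.filter (b · = j), y i -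
        ∑ i ∈ {i | b i < j}, y i) := by
  rw [← sum_fiberwise S b]
  refine sum_congr rfl fun j _ => ?_
  rw [sum_union, add_sub_cancel_left, mul_sum, inter_filter, inter_univ]
  · exact sum_congr rfl fun i hi => by rw [(mem_filter.1 hi).2]
  · exact disjoint_left.2 fun i hi hi' => by
      simp only [mem_filter, mem_inter, mem_univ, true_and] at hi hi'
      exact hi.ne hi'.2

theorem isGreatest_sum_mul_maximizers [DecidableEq E] (hf0 : f ∅ = 0) (hfmono : Monotone f)
    (hfsub : ∀ A B : Finset E, f (A ∪ B) + f (A ∩ B) ≤ f A + f B)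
    (b : E → Fin m) (hv : StrictAnti v) (hv0 : ∀ j, 0 < v j) (S : Finset E) :
    IsGreatest {t : ℝ | ∃ x ∈ maximizers f (fun i => v (b i)), t = ∑ i ∈ S, v (b i) * x i}
      (∑ j, v j *
        (f (univ.filter (b · < j) ∪ S ∩ univ.filter (b · = j)) - f {i | b i < j})) := by
  -- `P j` and `P j ∪ (S ∩ E_j)` are the sublevel sets `r < 2 * j` and `r < 2 * j + 1`.
  set r : E → ℕ := fun i => 2 * (b i : ℕ) + if i ∈ S then 0 else 1
  obtain ⟨x, hx, hxr⟩ := exists_mem_indepP_sum_sublevel_eq hf0 hfmono hfsub r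
  have hxb : ∀ k, ∑ i ∈ {i | (b i : ℕ) < k}, x i = f {i | (b i : ℕ) < k} := by
    intro k
    have hprefix : univ.filter (fun i => (b i : ℕ) < k) = univ.filter (r · < 2 * k) := by
      ext i; simp only [mem_filter, mem_univ, true_and, r]; split_ifs <;> omega
    rw [hprefix]; exact hxr _
  have hxR : ∀ j : Fin m, ∑ i ∈ univ.filter (b · < j) ∪ S ∩ univ.filter (b · = j), x i =
      f (univ.filter (b · < j) ∪ S ∩ univ.filter (b · = j)) := by
    intro j
    have hR : univ.filter (b · < j) ∪ S ∩ univ.filter (b · = j) =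
        univ.filter (r · < 2 * j + 1) := by
      ext i
      simp only [mem_union, mem_inter, mem_filter, mem_univ, true_and, r, Fin.lt_def,
        Fin.ext_iff]
      split_ifs with hS <;> simp only [hS, true_and, false_and, or_false] <;> omega
    rw [hR]; exact hxr _
  have hxmax := mem_maximizers_of_sum_sublevel_eq hv.antitone (fun j => (hv0 j).le) hx hxb
  refine ⟨⟨x, hxmax, ?_⟩, ?_⟩
  · rw [sum_mul_comp_eq_sum_mul_sub v b S]
    refine sum_congr rfl fun j _ => ?_
    rw [hxR, sum_sublevel_eq_of_mem_maximizers hv hv0 hx hxb hxmax]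
  · rintro _ ⟨z, hz, rfl⟩
    rw [sum_mul_comp_eq_sum_mul_sub v b S]
    gcongr with j
    · exact (hv0 j).le
    · exact hz.1.2 _
    · exact (sum_sublevel_eq_of_mem_maximizers hv hv0 hx hxb hz j).ge

end Blocks

theorem stmt_1_general {E : Type*} [Fintype E] [DecidableEq E]
    (f : Finset E → ℝ)
    (hf0 : f ∅ = 0)
    (hfmono : ∀ A B : Finset E, A ⊆ B → f A ≤ f B)
    (hfsub : ∀ A B : Finset E, f (A ∪ B) + f (A ∩ B) ≤ f A + f B)
    (m : ℕ) (blocks : Fin m → Finset E)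
    (hdisj : ∀ j j' : Fin m, j ≠ j' → Disjoint (blocks j) (blocks j'))
    (hcover : Finset.univ.biUnion blocks = (Finset.univ : Finset E))
    (v : Fin m → ℝ) (hvanti : StrictAnti v) (hvpos : ∀ j, 0 < v j)
    (w : E → ℝ) (hw : ∀ j : Fin m, ∀ i ∈ blocks j, w i = v j)
    (Xstar : Set (E → ℝ))
    (hX : Xstar = {x ∈ indepP f |
      ∀ y ∈ indepP f, ∑ i, w i * y i ≤ ∑ i, w i * x i})
    (P : Fin m → Finset E)
    (hP : ∀ j, P j = (Finset.univ.filter (fun j' => j' < j)).biUnion blocks) :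
    ∀ S : Finset E,
      IsGreatest {t : ℝ | ∃ x ∈ Xstar, t = ∑ i ∈ S, w i * x i}
        (∑ j, v j * (f (P j ∪ (S ∩ blocks j)) - f (P j))) := by
  obtain ⟨b, hb⟩ := exists_blockIndex hdisj hcover
  have hw' : w = fun i => v (b i) := funext fun i => hw _ i ((hb i _).2 rfl)
  have hP' : P = fun j => univ.filter (b · < j) := funext fun j => by ext i; simp [hP, hb]
  have hblocks : blocks = fun j => univ.filter (b · = j) := funext fun j => by ext i; simp [hb]
  subst hX hw' hP' hblocks
  exact isGreatest_sum_mul_maximizers hf0 hfmono hfsub b hvanti hvpos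

/-- with `f` a polymatroid rank function, `E` partitioned into
nonempty blocks with strictly decreasing positive values `v`, `w` the induced
weight vector, and `Xstar` the face of welfare maximizers over the independence
polytope, the maximum over `Xstar` of the `w`-weighted sum over any `S ⊆ E`
is `∑ j, v j * (f (P j ∪ (S ∩ blocks j)) - f (P j))`. -/
theorem stmt_1 {E : Type*} [Fintype E] [DecidableEq E]
    (f : Finset E → ℝ)
    (hf0 : f ∅ = 0)
    (hfmono : ∀ A B : Finset E, A ⊆ B → f A ≤ f B)
    (hfsub : ∀ A B : Finset E, f (A ∪ B) + f (A ∩ B) ≤ f A + f B)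
    (m : ℕ) (blocks : Fin m → Finset E)
    (hne : ∀ j, (blocks j).Nonempty)
    (hdisj : ∀ j j' : Fin m, j ≠ j' → Disjoint (blocks j) (blocks j'))
    (hcover : Finset.univ.biUnion blocks = (Finset.univ : Finset E))
    (v : Fin m → ℝ) (hvanti : StrictAnti v) (hvpos : ∀ j, 0 < v j)
    (w : E → ℝ) (hw : ∀ j : Fin m, ∀ i ∈ blocks j, w i = v j)
    (Xstar : Set (E → ℝ))
    (hX : Xstar = {x ∈ indepP f |
      ∀ y ∈ indepP f, ∑ i, w i * y i ≤ ∑ i, w i * x i})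
    (P : Fin m → Finset E)
    (hP : ∀ j, P j = (Finset.univ.filter (fun j' => j' < j)).biUnion blocks) :
    ∀ S : Finset E,
      IsGreatest {t : ℝ | ∃ x ∈ Xstar, t = ∑ i ∈ S, w i * x i}
        (∑ j, v j * (f (P j ∪ (S ∩ blocks j)) - f (P j))) :=
  stmt_1_general f hf0 hfmono hfsub m blocks hdisj hcover v hvanti hvpos w hw Xstar hX P hP
end

section
/- Let f be a polymatroid rank function on a finite ground set E with |E| = n. Then there exists a point u ∈ B(f) that is 1-majorized over the polymatroid: for every y ∈ P(f) and every k ∈ {1, …, n}, Q_k(u) ≥ Q_k(y). -/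
/-- The base polytope of a set function on a finite ground set. -/
def baseB {E : Type*} [Fintype E] (f : Finset E → ℝ) : Set (E → ℝ) :=
  {x ∈ indepP f | ∑ i, x i = f Finset.univ}

/-- `Qk x k` is the sum of the `k` smallest coordinates of `x`, i.e. the least
coordinate sum over subsets of size `k`. -/
noncomputable def Qk {E : Type*} [Fintype E] (x : E → ℝ) (k : ℕ) : ℝ :=
  sInf {s : ℝ | ∃ S : Finset E, S.card = k ∧ s = ∑ i ∈ S, x i}

/-!
Greedy construction (Fujishige's lexicographically optimal base): take a nonempty `T` of
minimal density `f T / #T = c`, put `u = c` on `T`, and recurse on the complement with the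
contraction `A ↦ f (A ∪ T) - f T`. Minimality of `c` and submodularity keep `u` in `P(f)`,
and the densities produced never decrease, so every sublevel set `{u < c}`, `{u ≤ c}` is
tight. For `k`, pick `c` with `#{u < c} < k ≤ #{u ≤ c}` and put `A = {u < c}`,
`B = {u ≤ c}`. Then `Q_k(u) = f A + (k - #A) c`, while for `y ∈ P(f)` the bounds
`y(A) ≤ f A`, `y(B) ≤ f B = f A + #(B \ A) c` and an averaging choice of `k - #A` points of
`B \ A` give `Q_k(y) ≤ f A + (k - #A) c`.
-/

open Finset

namespace Finset

variable {ι : Type*}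

theorem exists_subset_card_eq_card_nsmul_sum_le [DecidableEq ι] {β : Type*} [AddCommMonoid β]
    [LinearOrder β] [IsOrderedAddMonoid β] (y : ι → β) (D : Finset ι) {r : ℕ}
    (hr : r ≤ #D) :
    ∃ R ⊆ D, #R = r ∧ #D • ∑ i ∈ R, y i ≤ r • ∑ i ∈ D, y i := by
  -- Removing a largest element of `D` never raises the average.
  induction D using Finset.induction_on_max_value y generalizing r with
  | empty => exact ⟨∅, empty_subset _, by simp_all⟩
  | insert a s has hmax ih =>
    rw [card_insert_of_notMem has] at hr
    rcases hr.lt_or_eq with hr | rfl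
    · obtain ⟨R, hRs, hRr, hR⟩ := ih (Nat.le_of_lt_succ hr)
      refine ⟨R, hRs.trans (subset_insert a s), hRr, ?_⟩
      have hRa : ∑ i ∈ R, y i ≤ r • y a :=
        hRr ▸ sum_le_card_nsmul R y (y a) fun i hi ↦ hmax i (hRs hi)
      calc #(insert a s) • ∑ i ∈ R, y i = #s • ∑ i ∈ R, y i + ∑ i ∈ R, y i := by
            rw [card_insert_of_notMem has, succ_nsmul]
        _ ≤ r • ∑ i ∈ s, y i + r • y a := add_le_add hR hRa
        _ = r • ∑ i ∈ insert a s, y i := by rw [sum_insert has, nsmul_add, add_comm]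
    · exact ⟨insert a s, Subset.rfl, card_insert_of_notMem has, le_of_eq <| by
        rw [card_insert_of_notMem has]⟩

theorem exists_card_filter_lt_lt_le_card_filter_le {α : Type*} [LinearOrder α] (u : ι → α)
    {G : Finset ι} {k : ℕ} (hk : 0 < k) (hkG : k ≤ #G) :
    ∃ c, #{i ∈ G | u i < c} < k ∧ k ≤ #{i ∈ G | u i ≤ c} := by
  have hG : G.Nonempty := card_pos.mp (hk.trans_le hkG)
  obtain ⟨m, hmG, hm⟩ := exists_max_image G u hG
  have hC : {i ∈ G | k ≤ #{j ∈ G | u j ≤ u i}}.Nonempty :=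
    ⟨m, mem_filter.mpr ⟨hmG, by rwa [filter_true_of_mem hm]⟩⟩
  -- `u i₀` is the least value whose sublevel set in `G` has at least `k` elements.
  obtain ⟨i₀, hi₀, hmin⟩ := exists_min_image _ u hC
  refine ⟨u i₀, ?_, (mem_filter.mp hi₀).2⟩
  by_contra! hlt
  obtain ⟨j, hj, hjmax⟩ := exists_max_image {i ∈ G | u i < u i₀} u
    (card_pos.mp (hk.trans_le hlt))
  have hjk : k ≤ #{l ∈ G | u l ≤ u j} := hlt.trans <| card_le_card fun l hl ↦ by
    simp only [mem_filter] at hl ⊢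
    exact ⟨hl.1, hjmax l (mem_filter.mpr hl)⟩
  exact (mem_filter.mp hj).2.not_ge (hmin j (mem_filter.mpr ⟨(mem_filter.mp hj).1, hjk⟩))

end Finset

section Qk

variable {E : Type*} [Fintype E]

theorem Qk_le_sum (x : E → ℝ) {S : Finset E} {k : ℕ} (hS : #S = k) :
    Qk x k ≤ ∑ i ∈ S, x i := by
  refine csInf_le ?_ ⟨S, hS, rfl⟩
  refine ((Set.finite_range fun S : Finset E ↦ ∑ i ∈ S, x i).subset ?_).bddBelow
  rintro _ ⟨S', -, rfl⟩
  exact ⟨S', rfl⟩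

theorem le_Qk (x : E → ℝ) {k : ℕ} (hk : k ≤ Fintype.card E) {b : ℝ}
    (h : ∀ S : Finset E, #S = k → b ≤ ∑ i ∈ S, x i) : b ≤ Qk x k := by
  obtain ⟨S, -, hS⟩ :=
    exists_subset_card_eq (s := (univ : Finset E)) (n := k) (by rwa [card_univ])
  exact le_csInf ⟨_, S, hS, rfl⟩ fun _ ⟨S, hS, hb⟩ ↦ hb ▸ h S hS

variable [DecidableEq E]

theorem Qk_le_add_mul {y : E → ℝ} {A B : Finset E} (hAB : A ⊆ B) {k : ℕ} (hAk : #A < k)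
    (hkB : k ≤ #B) {a c : ℝ} (hA : ∑ i ∈ A, y i ≤ a)
    (hB : ∑ i ∈ B, y i ≤ a + #(B \ A) * c) :
    Qk y k ≤ a + (k - #A) * c := by
  have hBA : #(B \ A) = #B - #A := card_sdiff_of_subset hAB
  obtain ⟨R, hR, hRk, hRy⟩ :=
    exists_subset_card_eq_card_nsmul_sum_le y (B \ A) (r := k - #A) (by omega)
  rw [nsmul_eq_mul, nsmul_eq_mul] at hRy
  have hAR : Disjoint A R := disjoint_sdiff.mono_right hR
  have hySplit : ∑ i ∈ B \ A, y i + ∑ i ∈ A, y i = ∑ i ∈ B, y i :=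
    sum_sdiff hAB
  have hr : ((k - #A : ℕ) : ℝ) = k - #A := Nat.cast_sub hAk.le
  have hrd : (k : ℝ) - #A ≤ #(B \ A) := by
    rw [← hr]; exact_mod_cast (by omega : k - #A ≤ #(B \ A))
  have hd : (0 : ℝ) < #(B \ A) := by rw [hBA]; exact_mod_cast (by omega : 0 < #B - #A)
  calc Qk y k ≤ ∑ i ∈ A ∪ R, y i := Qk_le_sum y (by rw [card_union_of_disjoint hAR]; omega)
    _ = ∑ i ∈ A, y i + ∑ i ∈ R, y i := sum_union hAR
    _ ≤ a + (k - #A) * c := by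
      rw [hr] at hRy
      refine le_of_mul_le_mul_left ?_ hd
      nlinarith [mul_le_mul_of_nonneg_left hA (sub_nonneg.mpr hrd)]

theorem add_mul_le_Qk {u : E → ℝ} {A : Finset E} {c : ℝ} (hA : ∀ i ∈ A, u i ≤ c)
    (hAc : ∀ i ∉ A, c ≤ u i) {k : ℕ} (hk : k ≤ Fintype.card E) :
    ∑ i ∈ A, u i + (k - #A) * c ≤ Qk u k := by
  refine le_Qk u hk fun S hS ↦ ?_
  have hout : ∑ i ∈ A \ S, u i ≤ #(A \ S) • c :=
    sum_le_card_nsmul _ _ _ fun i hi ↦ hA i (mem_sdiff.mp hi).1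
  have hin : #(S \ A) • c ≤ ∑ i ∈ S \ A, u i :=
    card_nsmul_le_sum _ _ _ fun i hi ↦ hAc i (mem_sdiff.mp hi).2
  have hcard : (#(S \ A) : ℝ) - #(A \ S) = k - #A := by
    have h1 := card_sdiff_add_card_inter S A
    have h2 := card_sdiff_add_card_inter A S
    rw [inter_comm] at h2
    rw [← hS]
    linarith [(by exact_mod_cast h1 : (#(S \ A) : ℝ) + #(S ∩ A) = #S),
      (by exact_mod_cast h2 : (#(A \ S) : ℝ) + #(S ∩ A) = #A)]
  rw [nsmul_eq_mul] at hout hin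
  have := sum_sdiff_sub_sum_sdiff (s₁ := A) (s₂ := S) (f := u)
  rw [← hcard]
  linarith

end Qk

section Sublevel

variable {E : Type*}

def IsDownClosed (u : E → ℝ) (G L : Finset E) : Prop :=
  L ⊆ G ∧ ∀ i ∈ L, ∀ j ∈ G, u j ≤ u i → j ∈ L

theorem isDownClosed_self (u : E → ℝ) (G : Finset E) : IsDownClosed u G G :=
  ⟨Subset.rfl, fun _ _ _ hj _ ↦ hj⟩

theorem isDownClosed_filter_lt (u : E → ℝ) (G : Finset E) (c : ℝ) :
    IsDownClosed u G {i ∈ G | u i < c} :=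
  ⟨filter_subset _ _, fun _ hi _ hj hji ↦
    mem_filter.mpr ⟨hj, hji.trans_lt (mem_filter.mp hi).2⟩⟩

theorem isDownClosed_filter_le (u : E → ℝ) (G : Finset E) (c : ℝ) :
    IsDownClosed u G {i ∈ G | u i ≤ c} :=
  ⟨filter_subset _ _, fun _ hi _ hj hji ↦
    mem_filter.mpr ⟨hj, hji.trans (mem_filter.mp hi).2⟩⟩

structure IsSublevelTight (f : Finset E → ℝ) (G : Finset E) (u : E → ℝ) : Prop where
  sum_le : ∀ S ⊆ G, ∑ i ∈ S, u i ≤ f S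
  sum_eq : ∀ L, IsDownClosed u G L → ∑ i ∈ L, u i = f L

theorem IsSublevelTight.le_of_forall_mul_card_le {f : Finset E → ℝ} {G : Finset E}
    {u : E → ℝ} (hu : IsSublevelTight f G u) {c : ℝ}
    (hc : ∀ S ⊆ G, S.Nonempty → c * #S ≤ f S) :
    ∀ i ∈ G, c ≤ u i := fun i hi ↦ by
  obtain ⟨m, hmG, hm⟩ := exists_min_image G u ⟨i, hi⟩
  set L := {j ∈ G | u j ≤ u m}
  have hmL : m ∈ L := mem_filter.mpr ⟨hmG, le_rfl⟩
  have hL : ∑ j ∈ L, u j = #L * u m := by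
    rw [sum_eq_card_nsmul fun j hj ↦ (mem_filter.mp hj).2.antisymm (hm j (mem_filter.mp hj).1),
      nsmul_eq_mul]
  have hcL := hc L (filter_subset _ _) ⟨m, hmL⟩
  rw [← hu.sum_eq L (isDownClosed_filter_le u G _), hL] at hcL
  have hLpos : (0 : ℝ) < #L := by exact_mod_cast card_pos.mpr ⟨m, hmL⟩
  exact (le_of_mul_le_mul_right (by linarith) hLpos).trans (hm i hi)

theorem exists_min_density (f : Finset E → ℝ) {G : Finset E} (hG : G.Nonempty) :
    ∃ T ⊆ G, T.Nonempty ∧ ∃ c : ℝ,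
      f T = c * #T ∧ ∀ S ⊆ G, S.Nonempty → c * #S ≤ f S := by
  obtain ⟨T, hT, hmin⟩ :=
    exists_min_image {S ∈ G.powerset | S.Nonempty} (fun S ↦ f S / #S)
      ⟨G, mem_filter.mpr ⟨mem_powerset_self G, hG⟩⟩
  obtain ⟨hTG, hTne⟩ := mem_filter.mp hT
  have hTpos : (0 : ℝ) < #T := by exact_mod_cast card_pos.mpr hTne
  refine ⟨T, mem_powerset.mp hTG, hTne, f T / #T, (div_mul_cancel₀ _ hTpos.ne').symm,
    fun S hSG hS ↦ ?_⟩
  have hSpos : (0 : ℝ) < #S := by exact_mod_cast card_pos.mpr hS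
  exact (le_div_iff₀ hSpos).mp (hmin S (mem_filter.mpr ⟨mem_powerset.mpr hSG, hS⟩))

end Sublevel

section Submodular

variable {E : Type*} [DecidableEq E]

def Submodular (f : Finset E → ℝ) : Prop :=
  ∀ A B : Finset E, f (A ∪ B) + f (A ∩ B) ≤ f A + f B

def contract (f : Finset E → ℝ) (T A : Finset E) : ℝ :=
  f (A ∪ T) - f T

theorem contract_empty (f : Finset E → ℝ) (T : Finset E) : contract f T ∅ = 0 := by
  simp [contract]

theorem Submodular.contract {f : Finset E → ℝ} (hf : Submodular f) (T : Finset E) :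
    Submodular (contract f T) := fun A B ↦ by
  have h := hf (A ∪ T) (B ∪ T)
  rw [union_union_union_comm, union_self, ← inter_union_distrib_right] at h
  simp only [_root_.contract]
  linarith

variable {f : Finset E → ℝ}

theorem IsSublevelTight.piecewise (hf0 : f ∅ = 0) (hf : Submodular f) {G T : Finset E}
    (hTG : T ⊆ G) {c : ℝ} (hfT : f T = c * #T) (hc : ∀ S ⊆ G, S.Nonempty → c * #S ≤ f S)
    {u : E → ℝ} (hu : IsSublevelTight (contract f T) (G \ T) u) :
    IsSublevelTight f G (T.piecewise (fun _ ↦ c) u) := by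
  set v := T.piecewise (fun _ ↦ c) u
  have hc₀ : ∀ S ⊆ G, c * #S ≤ f S := fun S hSG ↦ by
    rcases S.eq_empty_or_nonempty with rfl | hS
    · simp [hf0]
    · exact hc S hSG hS
  have hsum : ∀ S, ∑ i ∈ S, v i = c * #(S ∩ T) + ∑ i ∈ S \ T, u i := fun S ↦ by
    rw [sum_piecewise, sum_const, nsmul_eq_mul, mul_comm]
  have hcu : ∀ i ∈ G \ T, c ≤ u i := hu.le_of_forall_mul_card_le fun S hS hSne ↦ by
    have hST : Disjoint S T := disjoint_of_subset_left hS sdiff_disjoint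
    have := hc (S ∪ T) (union_subset (hS.trans sdiff_subset) hTG) (hSne.mono subset_union_left)
    rw [card_union_of_disjoint hST, Nat.cast_add] at this
    simp only [contract]
    linarith
  have hcv : ∀ i ∈ G, c ≤ v i := fun i hi ↦ by
    by_cases hiT : i ∈ T
    · simp [v, hiT]
    · simpa [v, hiT] using hcu i (mem_sdiff.mpr ⟨hi, hiT⟩)
  refine ⟨fun S hSG ↦ ?_, fun L hL ↦ ?_⟩
  · have hu' := hu.sum_le (S \ T) (sdiff_subset_sdiff hSG Subset.rfl)
    have hST := hc₀ (S ∩ T) (inter_subset_left.trans hSG)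
    simp only [contract, sdiff_union_self_eq_union] at hu'
    rw [hsum]
    linarith [hf S T]
  rcases L.eq_empty_or_nonempty with rfl | ⟨i, hi⟩
  · simp [hf0]
  have hTL : T ⊆ L := fun j hj ↦
    hL.2 i hi j (hTG hj) (by simpa [v, hj] using hcv i (hL.1 hi))
  have hLT : IsDownClosed u (G \ T) (L \ T) := by
    refine ⟨sdiff_subset_sdiff hL.1 Subset.rfl, fun l hl j hj hjl ↦ ?_⟩
    obtain ⟨hlL, hlT⟩ := mem_sdiff.mp hl
    obtain ⟨hjG, hjT⟩ := mem_sdiff.mp hj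
    exact mem_sdiff.mpr ⟨hL.2 l hlL j hjG (by simpa [v, hlT, hjT] using hjl), hjT⟩
  have hu' := hu.sum_eq _ hLT
  simp only [contract, sdiff_union_of_subset hTL] at hu'
  rw [hsum, inter_eq_right.mpr hTL, hu']
  linarith

theorem exists_isSublevelTight (hf0 : f ∅ = 0) (hf : Submodular f) (G : Finset E) :
    ∃ u, IsSublevelTight f G u := by
  induction G using Finset.strongInduction generalizing f with
  | H G ih =>
    rcases G.eq_empty_or_nonempty with rfl | hG
    · refine ⟨0, fun S hS ↦ ?_, fun L hL ↦ ?_⟩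
      · simp [subset_empty.mp hS, hf0]
      · simp [subset_empty.mp hL.1, hf0]
    obtain ⟨T, hTG, hT, c, hfT, hc⟩ := exists_min_density f hG
    obtain ⟨u, hu⟩ := ih (G \ T) (sdiff_ssubset hTG hT) (contract_empty f T) (hf.contract T)
    exact ⟨_, hu.piecewise hf0 hf hTG hfT hc⟩

end Submodular

/-- every polymatroid has a `1`-majorized point in its base
polytope. -/
theorem stmt_4 {E : Type*} [Fintype E] [DecidableEq E]
    (f : Finset E → ℝ)
    (hf0 : f ∅ = 0)
    (hfmono : ∀ A B : Finset E, A ⊆ B → f A ≤ f B)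
    (hfsub : ∀ A B : Finset E, f (A ∪ B) + f (A ∩ B) ≤ f A + f B) :
    ∃ u ∈ baseB f, ∀ y ∈ indepP f, ∀ k : ℕ,
      1 ≤ k → k ≤ Fintype.card E → Qk y k ≤ Qk u k := by
  obtain ⟨u, hu⟩ := exists_isSublevelTight hf0 hfsub (univ : Finset E)
  have hu0 : ∀ i, 0 ≤ u i := fun i ↦ hu.le_of_forall_mul_card_le
    (fun S _ _ ↦ by simpa [hf0] using hfmono ∅ S (empty_subset S)) i (mem_univ i)
  refine ⟨u, ⟨⟨hu0, fun S ↦ hu.sum_le S (subset_univ S)⟩, hu.sum_eq _ (isDownClosed_self u _)⟩,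
    fun y hy k hk hkE ↦ ?_⟩
  obtain ⟨c, hAk, hkB⟩ :=
    exists_card_filter_lt_lt_le_card_filter_le u hk (hkE.trans_eq card_univ.symm)
  set A : Finset E := {i | u i < c}
  set B : Finset E := {i | u i ≤ c}
  have hAB : A ⊆ B := monotone_filter_right _ fun _ _ ↦ le_of_lt
  have hfA : f A = ∑ i ∈ A, u i := (hu.sum_eq A (isDownClosed_filter_lt u univ c)).symm
  have hBA : ∀ i ∈ B \ A, u i = c := fun i hi ↦ by
    simp only [A, B, mem_sdiff, mem_filter, mem_univ, true_and, not_lt] at hi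
    exact hi.1.antisymm hi.2
  have hfB : f B = ∑ i ∈ A, u i + #(B \ A) * c := by
    rw [← hu.sum_eq B (isDownClosed_filter_le u univ c), ← sum_sdiff hAB, add_comm,
      sum_eq_card_nsmul hBA, nsmul_eq_mul]
  calc Qk y k ≤ f A + (k - #A) * c :=
        Qk_le_add_mul hAB hAk hkB (hy.2 A) (by rw [hfA, ← hfB]; exact hy.2 B)
    _ ≤ Qk u k := hfA ▸ add_mul_le_Qk (fun i hi ↦ (mem_filter.mp hi).2.le)
        (fun i hi ↦ by simpa [A] using hi) hkE
end

section
/- Let E be a finite ground set, f a polymatroid rank function on E, and let E be partitioned into nonempty blocks E'_1, …, E'_K with associated canonical values 0 < m_1 < m_2 < … < m_K. Let w ∈ ℝ^E be the weight vector with w_i = m_j for i ∈ E'_j, and let X* be the set of points x ∈ P(f) maximizing Σ_{i∈E} w_i x_i over P(f). Fix k ∈ {1, …, K}, let P_{>k} = ∪_{j>k} E'_j, define ĝ_k(S) = m_k · ( f(P_{>k} ∪ (S ∩ E'_k)) − f(P_{>k}) ) for S ⊆ E, and let U_k = { u ∈ ℝ^E : there is x ∈ X* with u_i = m_k x_i for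 i ∈ E'_k and u_i = 0 for i ∉ E'_k }. Then B(ĝ_k) ⊆ U_k ⊆ P(ĝ_k). -/
/-!
Write `Q_n` for the union of the blocks of index at least `n`. The weight is
`w = ∑ₙ (m_n - m_{n-1}) 𝟙_{Q_n}` with positive coefficients, so a point of `P(f)` is optimal
exactly when it is tight on every `Q_n`, as soon as one such point exists. Being in `P(f)` and
tight on the chain amounts to being, on each block `E'_n`, a base of the minor
`S ↦ f(Q_{n+1} ∪ S) - f(Q_{n+1})`: these bases glue by submodularity, and they exist (greedily).
For the block `k` this minor is `ĝ_k / m_k`. Hence a base of `ĝ_k`, rescaled, extends to an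
optimum; conversely an optimum `x` is tight on `P_{>k} = Q_{k+1}`, which bounds `x(S ∩ E'_k)` by
`f(P_{>k} ∪ (S ∩ E'_k)) - f(P_{>k})`.
-/

open Finset Function

section SetFunction

variable {E : Type*} {f : Finset E → ℝ} {A : Finset E} {x y : E → ℝ}

def IsBaseOn (f : Finset E → ℝ) (A : Finset E) (x : E → ℝ) : Prop :=
  (∀ T ⊆ A, ∑ i ∈ T, x i ≤ f T) ∧ ∑ i ∈ A, x i = f A

namespace IsBaseOn

lemma congr (h : ∀ i ∈ A, x i = y i) (hx : IsBaseOn f A x) : IsBaseOn f A y := by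
  have hsum : ∀ T ⊆ A, ∑ i ∈ T, x i = ∑ i ∈ T, y i := fun T hT =>
    sum_congr rfl fun i hi => h i (hT hi)
  exact ⟨fun T hT => hsum T hT ▸ hx.1 T hT, hsum A subset_rfl ▸ hx.2⟩

lemma nonneg [DecidableEq E] (hmono : ∀ S T : Finset E, S ⊆ T → f S ≤ f T)
    (hx : IsBaseOn f A x) {i : E} (hi : i ∈ A) : 0 ≤ x i := by
  have hrest := hx.1 (A.erase i) (erase_subset i A)
  have hle := hmono _ _ (erase_subset i A)
  have hsplit := add_sum_erase A x hi
  linarith [hx.2]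

end IsBaseOn

lemma isBaseOn_empty (hf0 : f ∅ = 0) : IsBaseOn f ∅ x :=
  ⟨fun T hT => by simp [subset_empty.mp hT, hf0], by simp [hf0]⟩

lemma IsBaseOn.mem_indepP [Fintype E] (hmono : ∀ S T : Finset E, S ⊆ T → f S ≤ f T)
    (hx : IsBaseOn f univ x) : x ∈ indepP f := by
  classical
  exact ⟨fun i => hx.nonneg hmono (mem_univ i), fun S => hx.1 S (subset_univ S)⟩

lemma isBaseOn_singleton (hf0 : f ∅ = 0) {a : E} (ha : x a = f {a}) : IsBaseOn f {a} x :=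
  ⟨fun T hT => by rcases subset_singleton_iff.mp hT with rfl | rfl <;> simp [hf0, ha], by simp [ha]⟩

variable [DecidableEq E]

def contraction (f : Finset E → ℝ) (A S : Finset E) : ℝ := f (A ∪ S) - f A

@[simp] lemma contraction_empty (f : Finset E → ℝ) (A : Finset E) : contraction f A ∅ = 0 := by
  simp [contraction]

lemma contraction_submodular (hsub : ∀ S T : Finset E, f (S ∪ T) + f (S ∩ T) ≤ f S + f T)
    (A S T : Finset E) :
    contraction f A (S ∪ T) + contraction f A (S ∩ T) ≤ contraction f A S + contraction f A T := by
  have h := hsub (A ∪ S) (A ∪ T)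
  rw [← union_union_distrib_left, ← union_inter_distrib_left] at h
  simp only [contraction]
  linarith

lemma sum_le_contraction_of_tight (hx : ∀ S : Finset E, ∑ i ∈ S, x i ≤ f S)
    (hA : ∑ i ∈ A, x i = f A) {T : Finset E} (hT : Disjoint T A) :
    ∑ i ∈ T, x i ≤ contraction f A T := by
  have := hx (A ∪ T)
  rw [sum_union hT.symm, hA] at this
  simp only [contraction]
  linarith

lemma IsBaseOn.glue (hsub : ∀ S T : Finset E, f (S ∪ T) + f (S ∩ T) ≤ f S + f T) {B : Finset E}
    (hAB : A ⊆ B) (hA : IsBaseOn f A x) (hBA : IsBaseOn (contraction f A) (B \ A) x) :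
    IsBaseOn f B x := by
  refine ⟨fun T hT => ?_, ?_⟩
  · -- x(T) = x(T ∩ A) + x(T \ A) ≤ f(T ∩ A) + (f(A ∪ T) - f(A)) ≤ f(T)
    have hin := hA.1 (T ∩ A) inter_subset_right
    have hout := hBA.1 (T \ A) (sdiff_subset_sdiff hT subset_rfl)
    rw [contraction, union_sdiff_self_eq_union, union_comm] at hout
    have := hsub T A
    rw [← sum_inter_add_sum_sdiff T A]
    linarith
  · have := hBA.2
    rw [contraction, union_sdiff_of_subset hAB] at this
    rw [← sum_sdiff hAB]
    linarith [hA.2]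

lemma exists_isBaseOn (hf0 : f ∅ = 0)
    (hsub : ∀ S T : Finset E, f (S ∪ T) + f (S ∩ T) ≤ f S + f T) (A : Finset E) :
    ∃ x, IsBaseOn f A x := by
  induction A using Finset.induction_on with
  | empty => exact ⟨0, isBaseOn_empty hf0⟩
  | insert a A ha ih =>
    obtain ⟨x, hx⟩ := ih
    refine ⟨update x a (contraction f A {a}), IsBaseOn.glue hsub (subset_insert a A) ?_ ?_⟩
    · exact hx.congr fun i hi => (update_of_ne (ne_of_mem_of_not_mem hi ha) _ _).symm
    · rw [insert_sdiff_cancel ha]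
      exact isBaseOn_singleton (contraction_empty f A) (update_self a _ x)

lemma IsBaseOn.of_chain (hf0 : f ∅ = 0)
    (hsub : ∀ S T : Finset E, f (S ∪ T) + f (S ∩ T) ≤ f S + f T) {C : ℕ → Finset E} {N : ℕ}
    (hN : C N = ∅) (hC : ∀ n < N, C (n + 1) ⊆ C n)
    (hstep : ∀ n < N, IsBaseOn (contraction f (C (n + 1))) (C n \ C (n + 1)) x) {n : ℕ}
    (hn : n ≤ N) : IsBaseOn f (C n) x := by
  induction hn using Nat.decreasingInduction with
  | self => exact hN ▸ isBaseOn_empty hf0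
  | of_succ n hn ih => exact ih.glue hsub (hC n hn) (hstep n hn)

end SetFunction

section Blocks

variable {E : Type*} [DecidableEq E] {K : ℕ} {blocks : Fin K → Finset E}

variable (blocks) in
def blockUpper (n : ℕ) : Finset E := (univ.filter fun j : Fin K => n ≤ (j : ℕ)).biUnion blocks

lemma mem_blockUpper {i : E} {n : ℕ} :
    i ∈ blockUpper blocks n ↔ ∃ j : Fin K, n ≤ j ∧ i ∈ blocks j := by
  simp [blockUpper]

lemma blockUpper_eq_empty {n : ℕ} (hn : K ≤ n) : blockUpper blocks n = ∅ := by
  ext i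
  simp only [mem_blockUpper, notMem_empty, iff_false, not_exists, not_and]
  intro j hj
  omega

lemma blockUpper_succ_subset (n : ℕ) : blockUpper blocks (n + 1) ⊆ blockUpper blocks n := by
  intro i
  simp only [mem_blockUpper]
  exact fun ⟨j, hj, hi⟩ => ⟨j, by omega, hi⟩

lemma blockUpper_succ_eq (j : Fin K) :
    blockUpper blocks (j + 1) = (univ.filter fun j' => j < j').biUnion blocks := by
  simp only [blockUpper, Nat.succ_le_iff, Fin.val_fin_lt]

lemma blockUpper_zero [Fintype E] (hcover : univ.biUnion blocks = univ) :
    blockUpper blocks 0 = univ := by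
  simpa [blockUpper] using hcover

lemma mem_blockUpper_of_mem (hdisj : Pairwise (Disjoint on blocks)) {i : E} {j : Fin K}
    (hi : i ∈ blocks j) {n : ℕ} : i ∈ blockUpper blocks n ↔ n ≤ j := by
  refine mem_blockUpper.trans ⟨fun ⟨j', hj', hi'⟩ => ?_, fun hn => ⟨j, hn, hi⟩⟩
  rwa [hdisj.eq (not_disjoint_iff.mpr ⟨i, hi', hi⟩)] at hj'

lemma disjoint_blockUpper_succ (hdisj : Pairwise (Disjoint on blocks)) (j : Fin K) :
    Disjoint (blocks j) (blockUpper blocks (j + 1)) :=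
  disjoint_left.mpr fun _ hi hi' => by
    have := (mem_blockUpper_of_mem hdisj hi).mp hi'
    omega

lemma blockUpper_sdiff_succ (hdisj : Pairwise (Disjoint on blocks)) (j : Fin K) :
    blockUpper blocks j \ blockUpper blocks (j + 1) = blocks j := by
  ext i
  refine ⟨fun hi => ?_, fun hi => ?_⟩
  · obtain ⟨⟨j', hj', hi'⟩, hnot⟩ := And.imp_left mem_blockUpper.mp (mem_sdiff.mp hi)
    rw [mem_blockUpper_of_mem hdisj hi'] at hnot
    rwa [show j = j' by omega]
  · exact mem_sdiff.mpr ⟨(mem_blockUpper_of_mem hdisj hi).mpr le_rfl,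
      fun h => by have := (mem_blockUpper_of_mem hdisj hi).mp h; omega⟩

lemma exists_eq_on_blocks (hdisj : Pairwise (Disjoint on blocks)) (y : Fin K → E → ℝ) :
    ∃ x : E → ℝ, ∀ j, ∀ i ∈ blocks j, x i = y j i := by
  classical
  refine ⟨fun i => if h : ∃ j, i ∈ blocks j then y h.choose i else 0, fun j i hi => ?_⟩
  have h : ∃ j, i ∈ blocks j := ⟨j, hi⟩
  dsimp only
  rw [dif_pos h, hdisj.eq (not_disjoint_iff.mpr ⟨i, h.choose_spec, hi⟩)]

end Blocks

section Chain

variable {E : Type*} [DecidableEq E] {K : ℕ} {blocks : Fin K → Finset E} {f : Finset E → ℝ}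

lemma isBaseOn_blockUpper (hf0 : f ∅ = 0)
    (hsub : ∀ S T : Finset E, f (S ∪ T) + f (S ∩ T) ≤ f S + f T)
    (hdisj : Pairwise (Disjoint on blocks)) {x : E → ℝ}
    (hx : ∀ j : Fin K, IsBaseOn (contraction f (blockUpper blocks (j + 1))) (blocks j) x)
    (n : ℕ) : IsBaseOn f (blockUpper blocks n) x := by
  rcases le_or_gt n K with hn | hn
  · refine IsBaseOn.of_chain hf0 hsub (blockUpper_eq_empty le_rfl)
      (fun m _ => blockUpper_succ_subset m) (fun m hm => ?_) hn
    simpa only [blockUpper_sdiff_succ hdisj ⟨m, hm⟩] using hx ⟨m, hm⟩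
  · rw [blockUpper_eq_empty hn.le]
    exact isBaseOn_empty hf0

theorem exists_mem_indepP_tight_eq_on_blocks [Fintype E] (hf0 : f ∅ = 0)
    (hmono : ∀ S T : Finset E, S ⊆ T → f S ≤ f T)
    (hsub : ∀ S T : Finset E, f (S ∪ T) + f (S ∩ T) ≤ f S + f T)
    (hdisj : Pairwise (Disjoint on blocks)) (hcover : univ.biUnion blocks = univ)
    (y : Fin K → E → ℝ)
    (hy : ∀ j : Fin K, IsBaseOn (contraction f (blockUpper blocks (j + 1))) (blocks j) (y j)) :
    ∃ x ∈ indepP f, (∀ n, ∑ i ∈ blockUpper blocks n, x i = f (blockUpper blocks n)) ∧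
      ∀ j, ∀ i ∈ blocks j, x i = y j i := by
  obtain ⟨x, hxy⟩ := exists_eq_on_blocks hdisj y
  have hx := isBaseOn_blockUpper hf0 hsub hdisj fun j => (hy j).congr fun i hi => (hxy j i hi).symm
  refine ⟨x, ?_, fun n => (hx n).2, hxy⟩
  exact (blockUpper_zero hcover ▸ hx 0).mem_indepP hmono

end Chain

section Weights

variable {K : ℕ}

def shiftedLevels (mv : Fin K → ℝ) : ℕ → ℝ
  | 0 => 0
  | n + 1 => if h : n < K then mv ⟨n, h⟩ else 0

/-- `levelJump mv n = m_n - m_{n-1}` with the convention `m_{-1} = 0`. -/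
def levelJump (mv : Fin K → ℝ) (n : ℕ) : ℝ := shiftedLevels mv (n + 1) - shiftedLevels mv n

lemma sum_range_levelJump (mv : Fin K → ℝ) (j : Fin K) :
    ∑ n ∈ range (j + 1), levelJump mv n = mv j := by
  simp only [levelJump, sum_range_sub]
  simp [shiftedLevels]

lemma levelJump_pos {mv : Fin K → ℝ} (hmono : StrictMono mv) (hpos : ∀ j, 0 < mv j) {n : ℕ}
    (hn : n < K) : 0 < levelJump mv n := by
  cases n with
  | zero => simpa [levelJump, shiftedLevels, hn] using hpos ⟨0, hn⟩
  | succ n =>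
    simp only [levelJump, shiftedLevels, hn, (Nat.lt_succ_self n).trans hn, dite_true, sub_pos]
    exact hmono (Fin.mk_lt_mk.mpr n.lt_succ_self)

variable {E : Type*} [Fintype E] [DecidableEq E] {blocks : Fin K → Finset E}
  {mv : Fin K → ℝ} {w : E → ℝ}

lemma weight_eq_sum_levelJump (hdisj : Pairwise (Disjoint on blocks))
    (hcover : univ.biUnion blocks = univ) (hw : ∀ j, ∀ i ∈ blocks j, w i = mv j) (i : E) :
    w i = ∑ n ∈ range K, if i ∈ blockUpper blocks n then levelJump mv n else 0 := by
  obtain ⟨j, -, hi⟩ := mem_biUnion.mp (hcover ▸ mem_univ i)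
  simp_rw [mem_blockUpper_of_mem hdisj hi, ← sum_filter]
  rw [show (range K).filter (· ≤ (j : ℕ)) = range (j + 1) by ext; simp; omega,
    sum_range_levelJump, hw j i hi]

lemma sum_weight_mul_eq (hdisj : Pairwise (Disjoint on blocks))
    (hcover : univ.biUnion blocks = univ) (hw : ∀ j, ∀ i ∈ blocks j, w i = mv j) (x : E → ℝ) :
    ∑ i, w i * x i = ∑ n ∈ range K, levelJump mv n * ∑ i ∈ blockUpper blocks n, x i := by
  simp_rw [weight_eq_sum_levelJump hdisj hcover hw, sum_mul, ite_mul, zero_mul, mul_sum]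
  rw [sum_comm]
  refine sum_congr rfl fun n _ => ?_
  rw [← sum_filter, filter_mem_eq_inter, univ_inter]

end Weights

section Optimality

variable {E : Type*} [Fintype E] [DecidableEq E] {K : ℕ} {blocks : Fin K → Finset E}
  {mv : Fin K → ℝ} {w : E → ℝ} {f : Finset E → ℝ}

lemma sum_weight_mul_le_of_tight (hdisj : Pairwise (Disjoint on blocks))
    (hcover : univ.biUnion blocks = univ) (hw : ∀ j, ∀ i ∈ blocks j, w i = mv j)
    (hjump : ∀ n < K, 0 ≤ levelJump mv n) {x y : E → ℝ}
    (hx : ∀ n, ∑ i ∈ blockUpper blocks n, x i = f (blockUpper blocks n)) (hy : y ∈ indepP f) :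
    ∑ i, w i * y i ≤ ∑ i, w i * x i := by
  rw [sum_weight_mul_eq hdisj hcover hw, sum_weight_mul_eq hdisj hcover hw]
  refine sum_le_sum fun n hn => ?_
  rw [hx n]
  exact mul_le_mul_of_nonneg_left (hy.2 _) (hjump n (mem_range.mp hn))

lemma tight_of_isMax (hf0 : f ∅ = 0) (hdisj : Pairwise (Disjoint on blocks))
    (hcover : univ.biUnion blocks = univ) (hw : ∀ j, ∀ i ∈ blocks j, w i = mv j)
    (hjump : ∀ n < K, 0 < levelJump mv n) {x x₀ : E → ℝ} (hx : x ∈ indepP f)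
    (hmax : ∀ y ∈ indepP f, ∑ i, w i * y i ≤ ∑ i, w i * x i) (hx₀ : x₀ ∈ indepP f)
    (htight₀ : ∀ n, ∑ i ∈ blockUpper blocks n, x₀ i = f (blockUpper blocks n)) (n : ℕ) :
    ∑ i ∈ blockUpper blocks n, x i = f (blockUpper blocks n) := by
  rcases le_or_gt K n with hn | hn
  · simp [blockUpper_eq_empty hn, hf0]
  refine (hx.2 _).antisymm (not_lt.mp fun hlt => (hmax x₀ hx₀).not_gt ?_)
  rw [sum_weight_mul_eq hdisj hcover hw, sum_weight_mul_eq hdisj hcover hw]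
  refine sum_lt_sum (fun m hm => ?_) ⟨n, mem_range.mpr hn, ?_⟩
  · rw [htight₀ m]
    exact mul_le_mul_of_nonneg_left (hx.2 _) (hjump m (mem_range.mp hm)).le
  · rw [htight₀ n]
    exact mul_lt_mul_of_pos_left hlt (hjump n hn)

end Optimality

section ScaledRestriction

variable {E : Type*} [Fintype E] [DecidableEq E] {g : Finset E → ℝ} {c : ℝ} {B : Finset E}
  {u : E → ℝ}

lemma eq_zero_and_isBaseOn_of_mem_baseB (hc : 0 < c) (hg0 : g ∅ = 0)
    (hu : u ∈ baseB fun S => c * g (S ∩ B)) :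
    (∀ i ∉ B, u i = 0) ∧ IsBaseOn g B fun i => u i / c := by
  obtain ⟨⟨hu0, hule⟩, husum⟩ := hu
  have hoff : ∀ i ∉ B, u i = 0 := fun i hi =>
    (by simpa [singleton_inter_of_notMem hi, hg0] using hule {i} : u i ≤ 0).antisymm (hu0 i)
  refine ⟨hoff, fun T hT => ?_, ?_⟩
  · rw [← sum_div, div_le_iff₀' hc]
    simpa [inter_eq_left.mpr hT] using hule T
  · rw [← sum_div, div_eq_iff hc.ne', sum_subset (subset_univ B) fun i _ hi => hoff i hi, husum,
      mul_comm]
    simp only [univ_inter]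

lemma mem_indepP_of_eq_mul (hc : 0 ≤ c) {x : E → ℝ} (hon : ∀ i ∈ B, u i = c * x i)
    (hoff : ∀ i ∉ B, u i = 0) (hx0 : ∀ i, 0 ≤ x i) (hx : ∀ T ⊆ B, ∑ i ∈ T, x i ≤ g T) :
    u ∈ indepP fun S => c * g (S ∩ B) := by
  refine ⟨fun i => ?_, fun S => ?_⟩
  · by_cases hi : i ∈ B
    · exact hon i hi ▸ mul_nonneg hc (hx0 i)
    · exact (hoff i hi).ge
  · have hS : ∑ i ∈ S, u i = c * ∑ i ∈ S ∩ B, x i := by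
      rw [← sum_subset inter_subset_left fun i hi hni => hoff i fun h => hni (mem_inter.mpr ⟨hi, h⟩),
        mul_sum]
      exact sum_congr rfl fun i hi => hon i (mem_inter.mp hi).2
    rw [hS]
    exact mul_le_mul_of_nonneg_left (hx _ inter_subset_right) hc

end ScaledRestriction

theorem stmt_7_general {E : Type*} [Fintype E] [DecidableEq E]
    (f : Finset E → ℝ)
    (hf0 : f ∅ = 0)
    (hfmono : ∀ A B : Finset E, A ⊆ B → f A ≤ f B)
    (hfsub : ∀ A B : Finset E, f (A ∪ B) + f (A ∩ B) ≤ f A + f B)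
    (K : ℕ) (blocks : Fin K → Finset E)
    (hdisj : ∀ j j' : Fin K, j ≠ j' → Disjoint (blocks j) (blocks j'))
    (hcover : Finset.univ.biUnion blocks = (Finset.univ : Finset E))
    (mv : Fin K → ℝ) (hmvmono : StrictMono mv) (hmvpos : ∀ j, 0 < mv j)
    (w : E → ℝ) (hw : ∀ j : Fin K, ∀ i ∈ blocks j, w i = mv j)
    (Xstar : Set (E → ℝ))
    (hX : Xstar = {x ∈ indepP f |
      ∀ y ∈ indepP f, ∑ i, w i * y i ≤ ∑ i, w i * x i})
    (k : Fin K)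
    (Pgt : Finset E)
    (hPgt : Pgt = (Finset.univ.filter (fun j => k < j)).biUnion blocks)
    (ghat : Finset E → ℝ)
    (hghat : ∀ S : Finset E, ghat S = mv k * (f (Pgt ∪ (S ∩ blocks k)) - f Pgt))
    (U : Set (E → ℝ))
    (hU : U = {u | ∃ x ∈ Xstar,
      (∀ i ∈ blocks k, u i = mv k * x i) ∧ ∀ i ∉ blocks k, u i = 0}) :
    baseB ghat ⊆ U ∧ U ⊆ indepP ghat := by
  have hjump : ∀ n < K, 0 < levelJump mv n := fun n => levelJump_pos hmvmono hmvpos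
  obtain rfl : ghat = fun S => mv k * contraction f Pgt (S ∩ blocks k) := funext hghat
  rw [← blockUpper_succ_eq] at hPgt
  subst hX hU hPgt
  have hminor (j : Fin K) :=
    exists_isBaseOn (contraction_empty f (blockUpper blocks (j + 1))) (contraction_submodular hfsub _)
      (blocks j)
  choose y hy using hminor
  obtain ⟨x₀, hx₀, htight₀, -⟩ :=
    exists_mem_indepP_tight_eq_on_blocks hf0 hfmono hfsub hdisj hcover y hy
  constructor
  · intro u hu
    obtain ⟨hoff, hbase⟩ := eq_zero_and_isBaseOn_of_mem_baseB (hmvpos k) (contraction_empty _ _) hu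
    obtain ⟨x, hx, htight, hxk⟩ := exists_mem_indepP_tight_eq_on_blocks hf0 hfmono hfsub hdisj
      hcover (update y k fun i => u i / mv k) fun j => by
        rcases eq_or_ne j k with rfl | hj
        · simpa using hbase
        · simpa [hj] using hy j
    refine ⟨x, ⟨hx, fun y hy => sum_weight_mul_le_of_tight hdisj hcover hw
      (fun n hn => (hjump n hn).le) htight hy⟩, fun i hi => ?_, hoff⟩
    rw [hxk k i hi, update_self]
    field_simp [(hmvpos k).ne']
  · rintro u ⟨x, ⟨hx, hmax⟩, hon, hoff⟩
    have hPgt := tight_of_isMax hf0 hdisj hcover hw hjump hx hmax hx₀ htight₀ (k + 1)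
    exact mem_indepP_of_eq_mul (hmvpos k).le hon hoff hx.1 fun T hT =>
      sum_le_contraction_of_tight hx.2 hPgt ((disjoint_blockUpper_succ hdisj k).mono_left hT)

/-- the set `U_k` of fake-utility vectors of welfare-optimal
allocations for the bucket `k` is sandwiched between the base polytope and
the independence polytope of the rank function `ĝ_k`. -/
theorem stmt_7 {E : Type*} [Fintype E] [DecidableEq E]
    (f : Finset E → ℝ)
    (hf0 : f ∅ = 0)
    (hfmono : ∀ A B : Finset E, A ⊆ B → f A ≤ f B)
    (hfsub : ∀ A B : Finset E, f (A ∪ B) + f (A ∩ B) ≤ f A + f B)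
    (K : ℕ) (blocks : Fin K → Finset E)
    (hne : ∀ j, (blocks j).Nonempty)
    (hdisj : ∀ j j' : Fin K, j ≠ j' → Disjoint (blocks j) (blocks j'))
    (hcover : Finset.univ.biUnion blocks = (Finset.univ : Finset E))
    (mv : Fin K → ℝ) (hmvmono : StrictMono mv) (hmvpos : ∀ j, 0 < mv j)
    (w : E → ℝ) (hw : ∀ j : Fin K, ∀ i ∈ blocks j, w i = mv j)
    (Xstar : Set (E → ℝ))
    (hX : Xstar = {x ∈ indepP f |
      ∀ y ∈ indepP f, ∑ i, w i * y i ≤ ∑ i, w i * x i})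
    (k : Fin K)
    (Pgt : Finset E)
    (hPgt : Pgt = (Finset.univ.filter (fun j => k < j)).biUnion blocks)
    (ghat : Finset E → ℝ)
    (hghat : ∀ S : Finset E, ghat S = mv k * (f (Pgt ∪ (S ∩ blocks k)) - f Pgt))
    (U : Set (E → ℝ))
    (hU : U = {u | ∃ x ∈ Xstar,
      (∀ i ∈ blocks k, u i = mv k * x i) ∧ ∀ i ∉ blocks k, u i = 0}) :
    baseB ghat ⊆ U ∧ U ⊆ indepP ghat :=
  stmt_7_general f hf0 hfmono hfsub K blocks hdisj hcover mv hmvmono hmvpos w hw Xstar hX k Pgt hPgt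
    ghat hghat U hU
end

section
/- Let n ≥ 1 be an integer, M > n a real number, β > 0, and p : {1, …, n} → ℝ≥0 with Σ_{j=1}^n p_j = 1. Define x_k = Σ_{j=1}^k p_j M^j for 1 ≤ k ≤ n and Q_j = Σ_{k=1}^j x_k. If Q_j ≥ M^j / β for every j ∈ {1, …, n}, then β ≥ n / (1 + n²/M). -/
/-!
Each `x_k ≤ M^k`, since the weights have total mass at most one and `M ≥ 1`.
Splitting off `x_j = x_{j-1} + p_j M^j` from `Q_j` gives
`Q_j ≤ (j - 1) M^(j-1) + M^(j-1) + p_j M^j = (p_j + j / M) M^j`,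
so the hypothesis `M^j / β ≤ Q_j` gives `1 / β ≤ p_j + j / M` for each `j`. Summing over
`j = 1, …, n` yields `n / β ≤ 1 + n² / M`.
-/

open Finset

def weightedPrefix (p : ℕ → ℝ) (M : ℝ) (k : ℕ) : ℝ :=
  ∑ j ∈ Icc 1 k, p j * M ^ j

section

variable {p : ℕ → ℝ} {M : ℝ} {n : ℕ}

lemma weightedPrefix_succ (p : ℕ → ℝ) (M : ℝ) (m : ℕ) :
    weightedPrefix p M (m + 1) = weightedPrefix p M m + p (m + 1) * M ^ (m + 1) :=
  sum_Icc_succ_top (Nat.le_add_left 1 m) _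

lemma weightedPrefix_le_pow (hM : 1 ≤ M) (hp : ∀ j, 0 ≤ p j)
    (hpsum : ∑ j ∈ Icc 1 n, p j ≤ 1) {k : ℕ} (hk : k ≤ n) :
    weightedPrefix p M k ≤ M ^ k := by
  have hmass : ∑ j ∈ Icc 1 k, p j ≤ 1 :=
    (sum_le_sum_of_subset_of_nonneg (Icc_subset_Icc_right hk) fun j _ _ => hp j).trans hpsum
  calc weightedPrefix p M k ≤ ∑ j ∈ Icc 1 k, p j * M ^ k :=
        sum_le_sum fun j hj =>
          mul_le_mul_of_nonneg_left (pow_le_pow_right₀ hM (mem_Icc.mp hj).2) (hp j)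
    _ = (∑ j ∈ Icc 1 k, p j) * M ^ k := (sum_mul ..).symm
    _ ≤ M ^ k := mul_le_of_le_one_left (pow_nonneg (zero_le_one.trans hM) k) hmass

lemma sum_weightedPrefix_le (hM : 1 ≤ M) (hp : ∀ j, 0 ≤ p j)
    (hpsum : ∑ j ∈ Icc 1 n, p j ≤ 1) {j : ℕ} (hj : j ∈ Icc 1 n) :
    ∑ k ∈ Icc 1 j, weightedPrefix p M k ≤ (p j + j / M) * M ^ j := by
  obtain ⟨m, rfl⟩ : ∃ m, j = m + 1 := Nat.exists_eq_add_one.mpr (mem_Icc.mp hj).1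
  have hmn : m ≤ n := (Nat.le_succ m).trans (mem_Icc.mp hj).2
  have hearlier : ∑ k ∈ Icc 1 m, weightedPrefix p M k ≤ m * M ^ m := by
    calc ∑ k ∈ Icc 1 m, weightedPrefix p M k ≤ ∑ _k ∈ Icc 1 m, M ^ m :=
          sum_le_sum fun k hk =>
            (weightedPrefix_le_pow hM hp hpsum ((mem_Icc.mp hk).2.trans hmn)).trans
              (pow_le_pow_right₀ hM (mem_Icc.mp hk).2)
      _ = m * M ^ m := by simp
  have hlast := weightedPrefix_le_pow hM hp hpsum hmn
  have hM0 : M ≠ 0 := (zero_lt_one.trans_le hM).ne'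
  calc ∑ k ∈ Icc 1 (m + 1), weightedPrefix p M k
        = ∑ k ∈ Icc 1 m, weightedPrefix p M k + weightedPrefix p M m
            + p (m + 1) * M ^ (m + 1) := by
          rw [sum_Icc_succ_top (Nat.le_add_left 1 m), weightedPrefix_succ, add_assoc]
    _ ≤ m * M ^ m + M ^ m + p (m + 1) * M ^ (m + 1) := by gcongr
    _ = (p (m + 1) + ((m + 1 : ℕ) : ℝ) / M) * M ^ (m + 1) := by
          field_simp
          push_cast
          ring

lemma sum_Icc_natCast_le_sq (n : ℕ) : ∑ j ∈ Icc 1 n, (j : ℝ) ≤ (n : ℝ) ^ 2 := by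
  calc ∑ j ∈ Icc 1 n, (j : ℝ) ≤ ∑ _j ∈ Icc 1 n, (n : ℝ) :=
        sum_le_sum fun j hj => by exact_mod_cast (mem_Icc.mp hj).2
    _ = (n : ℝ) ^ 2 := by simp [sq]

end

/-- the quantitative core of the impossibility result for
non-polymatroidal constraints. -/
theorem stmt_9 (n : ℕ) (hn : 1 ≤ n) (M : ℝ) (hM : (n : ℝ) < M)
    (β : ℝ) (hβ : 0 < β)
    (p : ℕ → ℝ) (hp : ∀ j, 0 ≤ p j) (hpsum : ∑ j ∈ Icc 1 n, p j = 1)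
    (x : ℕ → ℝ) (hx : ∀ k, x k = ∑ j ∈ Icc 1 k, p j * M ^ j)
    (Q : ℕ → ℝ) (hQ : ∀ j, Q j = ∑ k ∈ Icc 1 j, x k)
    (hmaj : ∀ j ∈ Icc 1 n, M ^ j / β ≤ Q j) :
    (n : ℝ) / (1 + (n : ℝ) ^ 2 / M) ≤ β := by
  obtain rfl : x = weightedPrefix p M := funext hx
  obtain rfl : Q = fun j => ∑ k ∈ Icc 1 j, weightedPrefix p M k := funext hQ
  have hM1 : 1 ≤ M := (Nat.one_le_cast.mpr hn).trans hM.le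
  have hM0 : 0 < M := zero_lt_one.trans_le hM1
  have hpointwise : ∀ j ∈ Icc 1 n, 1 / β ≤ p j + j / M := fun j hj =>
    le_of_mul_le_mul_right
      (by rw [one_div_mul_eq_div]
          exact (hmaj j hj).trans (sum_weightedPrefix_le hM1 hp hpsum.le hj))
      (pow_pos hM0 j)
  have hsummed : n * (1 / β) ≤ 1 + n ^ 2 / M :=
    calc n * (1 / β) = ∑ _j ∈ Icc 1 n, 1 / β := by simp
      _ ≤ ∑ j ∈ Icc 1 n, (p j + j / M) := sum_le_sum hpointwise
      _ = 1 + (∑ j ∈ Icc 1 n, (j : ℝ)) / M := by rw [sum_add_distrib, hpsum, sum_div]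
      _ ≤ 1 + n ^ 2 / M := by gcongr; exact sum_Icc_natCast_le_sq n
  rw [mul_one_div, div_le_iff₀ hβ] at hsummed
  rw [div_le_iff₀ (by positivity)]
  linarith
end

section
/- Let f be a polymatroid rank function on a finite ground set E with elements ordered e_1, …, e_n, and let v ∈ ℝ^E satisfy v_{e_1} ≥ v_{e_2} ≥ … ≥ v_{e_n} > 0. Define the greedy vector x by x_{e_j} = f({e_1, …, e_j}) − f({e_1, …, e_{j−1}}) for each j. Then x ∈ B(f) ⊆ P(f), and x maximizes the linear function Σ_{i∈E} v_i y_i over all y ∈ P(f). -/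
open Finset


def seg {E : Type*} [Fintype E] [DecidableEq E] {n : ℕ} (e : Fin n ≃ E) (k : ℕ) : Finset E :=
  (Finset.univ.filter (fun t : Fin n => (t : ℕ) < k)).image (fun t => e t)

lemma seg_zero {E : Type*} [Fintype E] [DecidableEq E] {n : ℕ} (e : Fin n ≃ E) :
    seg e 0 = ∅ := by simp [seg]

lemma seg_top {E : Type*} [Fintype E] [DecidableEq E] {n : ℕ} (e : Fin n ≃ E) :
    seg e n = Finset.univ := by
  ext i
  simp only [seg, Finset.mem_image, Finset.mem_filter, Finset.mem_univ, true_and,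
    iff_true]
  exact ⟨e.symm i, (e.symm i).isLt, e.apply_symm_apply i⟩

lemma seg_succ {E : Type*} [Fintype E] [DecidableEq E] {n : ℕ} (e : Fin n ≃ E)
    {m : ℕ} (h : m < n) : seg e (m + 1) = insert (e ⟨m, h⟩) (seg e m) := by
  ext i
  simp only [seg, Finset.mem_image, Finset.mem_filter, Finset.mem_univ, true_and,
    Finset.mem_insert, Nat.lt_succ_iff_lt_or_eq]
  constructor
  · rintro ⟨t, ht | ht, rfl⟩
    · exact Or.inr ⟨t, ht, rfl⟩
    · exact Or.inl (by congr 1; exact Fin.ext ht)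
  · rintro (rfl | ⟨t, ht, rfl⟩)
    · exact ⟨⟨m, h⟩, Or.inr rfl, rfl⟩
    · exact ⟨t, Or.inl ht, rfl⟩

lemma not_mem_seg {E : Type*} [Fintype E] [DecidableEq E] {n : ℕ} (e : Fin n ≃ E)
    {m : ℕ} (h : m < n) : e ⟨m, h⟩ ∉ seg e m := by
  simp only [seg, Finset.mem_image, Finset.mem_filter, Finset.mem_univ, true_and, not_exists]
  rintro t ⟨ht, hEq⟩
  have := e.injective hEq
  subst this
  exact absurd ht (lt_irrefl _)

lemma abel_sum (u w : ℕ → ℝ) : ∀ n, ∑ k ∈ Finset.range n, u k * w k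
    = (∑ k ∈ Finset.range n, (u k - u (k+1)) * ∑ j ∈ Finset.range (k+1), w j)
      + u n * ∑ j ∈ Finset.range n, w j := by
  intro n
  induction n with
  | zero => simp
  | succ n ih =>
    simp only [Finset.sum_range_succ] at ih ⊢
    rw [ih]
    ring

/-- the greedy vector for a weight vector that is non-increasing
along the ordering `e` lies in `B(f) ⊆ P(f)` and maximizes the weighted sum
over `P(f)`. -/
theorem stmt_13 {E : Type*} [Fintype E] [DecidableEq E]
    (f : Finset E → ℝ)
    (hf0 : f ∅ = 0)
    (hfmono : ∀ A B : Finset E, A ⊆ B → f A ≤ f B)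
    (hfsub : ∀ A B : Finset E, f (A ∪ B) + f (A ∩ B) ≤ f A + f B)
    (n : ℕ) (e : Fin n ≃ E)
    (v : E → ℝ)
    (hvpos : ∀ i, 0 < v i)
    (hvanti : ∀ j j' : Fin n, j ≤ j' → v (e j') ≤ v (e j))
    (x : E → ℝ)
    (hx : ∀ j : Fin n, x (e j) =
      f ((Finset.univ.filter (fun t => t ≤ j)).image (fun t => e t)) -
        f ((Finset.univ.filter (fun t => t < j)).image (fun t => e t))) :
    x ∈ baseB f ∧ baseB f ⊆ indepP f ∧
      ∀ y ∈ indepP f, ∑ i, v i * y i ≤ ∑ i, v i * x i := by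
  classical
  -- reformulated greedy formula
  have hx' : ∀ (m : ℕ) (h : m < n), x (e ⟨m, h⟩) = f (seg e (m+1)) - f (seg e m) := by
    intro m h
    rw [hx ⟨m, h⟩]
    congr 2
    · ext i
      simp only [seg, Finset.mem_image, Finset.mem_filter, Finset.mem_univ, true_and]
      constructor
      · rintro ⟨t, ht, rfl⟩; exact ⟨t, Nat.lt_succ_of_le ht, rfl⟩
      · rintro ⟨t, ht, rfl⟩; exact ⟨t, Nat.lt_succ_iff.mp ht, rfl⟩
  -- nonnegativity
  have hx0 : ∀ i, 0 ≤ x i := by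
    intro i
    obtain ⟨j, rfl⟩ : ∃ j, e j = i := ⟨e.symm i, e.apply_symm_apply i⟩
    have h := hx' j j.isLt
    rw [Fin.eta] at h
    rw [h]
    have hsub : seg e (j : ℕ) ⊆ seg e ((j : ℕ) + 1) := by
      rw [seg_succ e j.isLt]; exact Finset.subset_insert _ _
    linarith [hfmono _ _ hsub]
  -- total sums equal f on segments
  have tot : ∀ k, k ≤ n → ∑ i ∈ seg e k, x i = f (seg e k) := by
    intro k
    induction k with
    | zero => intro _; simp [seg_zero, hf0]
    | succ k ih =>
      intro hk
      have hk' : k < n := hk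
      rw [seg_succ e hk', Finset.sum_insert (not_mem_seg e hk'), ih hk'.le,
        hx' k hk', ← seg_succ e hk']
      ring
  -- independence of x
  have key : ∀ (S : Finset E) (k : ℕ), k ≤ n → ∑ i ∈ S ∩ seg e k, x i ≤ f (S ∩ seg e k) := by
    intro S k
    induction k with
    | zero => intro _; simp [seg_zero, hf0]
    | succ k ih =>
      intro hk
      have hk' : k < n := hk
      have hks := seg_succ e hk'
      have hns := not_mem_seg e hk'
      set a := e ⟨k, hk'⟩ with ha
      by_cases hS : a ∈ S
      · have hset : S ∩ seg e (k+1) = insert a (S ∩ seg e k) := by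
          ext i
          simp only [Finset.mem_inter, hks, Finset.mem_insert]
          constructor
          · rintro ⟨hiS, rfl | h⟩
            · exact Or.inl rfl
            · exact Or.inr ⟨hiS, h⟩
          · rintro (rfl | ⟨hiS, h⟩)
            · exact ⟨hS, Or.inl rfl⟩
            · exact ⟨hiS, Or.inr h⟩
        have hni : a ∉ S ∩ seg e k := by simp [hns]
        have hsum : ∑ i ∈ S ∩ seg e (k+1), x i = x a + ∑ i ∈ S ∩ seg e k, x i := by
          rw [hset, Finset.sum_insert hni]
        have hxa : x a = f (seg e (k+1)) - f (seg e k) := hx' k hk'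
        have hu : (S ∩ seg e (k+1)) ∪ seg e k = seg e (k+1) := by
          ext i
          simp only [Finset.mem_union, Finset.mem_inter, hks, Finset.mem_insert]
          constructor
          · rintro (⟨_, h⟩ | h); exact h; exact Or.inr h
          · rintro (rfl | h); exact Or.inl ⟨hS, Or.inl rfl⟩; exact Or.inr h
        have hi : (S ∩ seg e (k+1)) ∩ seg e k = S ∩ seg e k := by
          ext i
          simp only [Finset.mem_inter, hks, Finset.mem_insert]
          tauto
        have hsub := hfsub (S ∩ seg e (k+1)) (seg e k)
        rw [hu, hi] at hsub
        have ihk := ih hk'.le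
        linarith
      · have hset : S ∩ seg e (k+1) = S ∩ seg e k := by
          ext i
          simp only [Finset.mem_inter, hks, Finset.mem_insert]
          constructor
          · rintro ⟨hiS, rfl | h⟩; exact absurd hiS hS; exact ⟨hiS, h⟩
          · rintro ⟨hiS, h⟩; exact ⟨hiS, Or.inr h⟩
        rw [hset]; exact ih hk'.le
  have hxP : x ∈ indepP f := by
    refine ⟨hx0, fun S => ?_⟩
    have := key S n le_rfl
    rwa [seg_top, Finset.inter_univ] at this
  have hxB : x ∈ baseB f := by
    refine ⟨hxP, ?_⟩
    have := tot n le_rfl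
    rwa [seg_top] at this
  refine ⟨hxB, fun y hy => hy.1, ?_⟩
  -- optimality
  intro y hy
  set a : ℕ → ℝ := fun m => if h : m < n then v (e ⟨m, h⟩) else 0 with ha
  have hsum : ∀ z : E → ℝ, ∑ i, v i * z i
      = ∑ m ∈ Finset.range n, a m * (if h : m < n then z (e ⟨m, h⟩) else 0) := by
    intro z
    rw [← Equiv.sum_comp e (fun i => v i * z i),
      ← Fin.sum_univ_eq_sum_range (fun m => a m * (if h : m < n then z (e ⟨m, h⟩) else 0)) n]
    refine Finset.sum_congr rfl fun j _ => ?_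
    simp [ha, j.isLt]
  have hW : ∀ (z : E → ℝ) (k : ℕ), k ≤ n →
      ∑ m ∈ Finset.range k, (if h : m < n then z (e ⟨m, h⟩) else 0) = ∑ i ∈ seg e k, z i := by
    intro z k
    induction k with
    | zero => intro _; simp [seg_zero]
    | succ k ih =>
      intro hk
      have hk' : k < n := hk
      rw [Finset.sum_range_succ, ih hk'.le, seg_succ e hk',
        Finset.sum_insert (not_mem_seg e hk'), dif_pos hk']
      ring
  have han : a n = 0 := by simp [ha]
  have hd : ∀ k, k < n → 0 ≤ a k - a (k+1) := by
    intro k hk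
    by_cases h1 : k + 1 < n
    · have := hvanti ⟨k, hk⟩ ⟨k+1, h1⟩ (by simp [Fin.le_def])
      simp only [ha, dif_pos hk, dif_pos h1]
      linarith
    · simp only [ha, dif_pos hk, dif_neg h1, sub_zero]
      exact (hvpos _).le
  rw [hsum y, hsum x,
    abel_sum a (fun m => if h : m < n then y (e ⟨m, h⟩) else 0) n,
    abel_sum a (fun m => if h : m < n then x (e ⟨m, h⟩) else 0) n,
    han, zero_mul, zero_mul, add_zero, add_zero]
  refine Finset.sum_le_sum fun k hk => ?_
  have hk' : k < n := Finset.mem_range.mp hk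
  have hkn : k + 1 ≤ n := hk'
  have hYle : ∑ j ∈ Finset.range (k+1), (if h : j < n then y (e ⟨j, h⟩) else 0)
      ≤ ∑ j ∈ Finset.range (k+1), (if h : j < n then x (e ⟨j, h⟩) else 0) := by
    rw [hW y (k+1) hkn, hW x (k+1) hkn, tot (k+1) hkn]
    exact hy.2 (seg e (k+1))
  exact mul_le_mul_of_nonneg_left hYle (hd k hk')
end

section
/- Let f be a polymatroid rank function on a finite ground set E with |E| = n. For each permutation π of E, let x(π) ∈ ℝ^E be the greedy vector defined by x(π)_{π(j)} = f({π(1), …, π(j)}) − f({π(1), …, π(j−1)}) for 1 ≤ j ≤ n. Then the set of extreme points of the base polytope B(f) coincides exactly with the set { x(π) : π a permutation of E }. -/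
open Finset

namespace Polymatroid

variable {E : Type*}

def IsTight (f : Finset E → ℝ) (x : E → ℝ) (S : Finset E) : Prop :=
  ∑ i ∈ S, x i = f S

section Tight

variable {f : Finset E → ℝ}

lemma insert_sub_le_insert_sub_of_subset [DecidableEq E]
    (hfsub : ∀ A B : Finset E, f (A ∪ B) + f (A ∩ B) ≤ f A + f B)
    {A B : Finset E} (hAB : A ⊆ B) {e : E} (he : e ∉ B) :
    f (insert e B) - f B ≤ f (insert e A) - f A := by
  have h := hfsub (insert e A) B
  rw [insert_union, union_eq_right.2 hAB, insert_inter_of_notMem he, inter_eq_left.2 hAB] at h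
  linarith

variable [Fintype E]

lemma IsTight.of_mem_openSegment {x y z : E → ℝ} (hy : y ∈ indepP f) (hz : z ∈ indepP f)
    (hx : x ∈ openSegment ℝ y z) {S : Finset E} (hS : IsTight f x S) : IsTight f y S := by
  obtain ⟨a, b, ha, hb, hab, rfl⟩ := hx
  have hsum : ∑ i ∈ S, (a • y + b • z) i = a * ∑ i ∈ S, y i + b * ∑ i ∈ S, z i := by
    simp [sum_add_distrib, mul_sum]
  have hyS := hy.2 S
  have hzZ := mul_le_mul_of_nonneg_left (hz.2 S) hb.le
  have hsplit : a * f S + b * f S = f S := by rw [← add_mul, hab, one_mul]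
  unfold IsTight at *
  refine le_antisymm hyS (le_of_mul_le_mul_left ?_ ha)
  linarith

lemma exists_pos_le_slack {x : E → ℝ} (hx : x ∈ indepP f) :
    ∃ ε > 0, ∀ S, ¬ IsTight f x S → ε ≤ f S - ∑ i ∈ S, x i := by
  classical
  let slack : Finset E → ℝ := fun S => if IsTight f x S then 1 else f S - ∑ i ∈ S, x i
  have hpos (S : Finset E) : 0 < slack S := by
    by_cases hS : IsTight f x S
    · simp [slack, hS]
    · have hlt := lt_of_le_of_ne (hx.2 S) hS
      simp only [slack, hS, if_false]
      linarith
  obtain ⟨S₀, -, hS₀⟩ := exists_min_image univ slack univ_nonempty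
  exact ⟨slack S₀, hpos S₀, fun S hS => by simpa [slack, hS] using hS₀ S (mem_univ S)⟩

variable [DecidableEq E]

lemma nonneg_of_forall_sum_le (hfmono : ∀ A B : Finset E, A ⊆ B → f A ≤ f B) {x : E → ℝ}
    (hle : ∀ S, ∑ i ∈ S, x i ≤ f S) (huniv : ∑ i, x i = f univ) (e : E) : 0 ≤ x e := by
  have hsplit := add_sum_erase univ x (mem_univ e)
  have hrest := hle (univ.erase e)
  have hmono := hfmono _ _ (erase_subset e univ)
  linarith

lemma mem_baseB_of_forall_sum_le (hfmono : ∀ A B : Finset E, A ⊆ B → f A ≤ f B) {x : E → ℝ}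
    (hle : ∀ S, ∑ i ∈ S, x i ≤ f S) (huniv : ∑ i, x i = f univ) : x ∈ baseB f :=
  ⟨⟨nonneg_of_forall_sum_le hfmono hle huniv, hle⟩, huniv⟩

lemma IsTight.union_inter (hfsub : ∀ A B : Finset E, f (A ∪ B) + f (A ∩ B) ≤ f A + f B)
    {x : E → ℝ} (hx : x ∈ indepP f) {S T : Finset E} (hS : IsTight f x S)
    (hT : IsTight f x T) : IsTight f x (S ∪ T) ∧ IsTight f x (S ∩ T) := by
  have hsum := sum_union_inter (s₁ := S) (s₂ := T) (f := x)
  have hunion := hx.2 (S ∪ T)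
  have hinter := hx.2 (S ∩ T)
  have hsubm := hfsub S T
  unfold IsTight at *
  constructor <;> linarith

end Tight

section Prefix

variable [DecidableEq E]

def prefixSet {n : ℕ} (π : Fin n ≃ E) (k : ℕ) : Finset E :=
  (univ.filter fun t : Fin n => (t : ℕ) < k).image π

variable {n : ℕ} (π : Fin n ≃ E)

lemma mem_prefixSet {k : ℕ} {e : E} : e ∈ prefixSet π k ↔ (π.symm e : ℕ) < k := by
  simp only [prefixSet, mem_image, mem_filter, mem_univ, true_and]
  exact ⟨fun ⟨t, ht, hte⟩ => hte ▸ by simpa using ht, fun h => ⟨_, h, π.apply_symm_apply e⟩⟩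

@[simp]
lemma prefixSet_zero : prefixSet π 0 = ∅ := by
  simp [prefixSet]

lemma prefixSet_eq_univ [Fintype E] {k : ℕ} (hk : n ≤ k) : prefixSet π k = univ :=
  eq_univ_iff_forall.2 fun e => (mem_prefixSet π).2 ((π.symm e).is_lt.trans_le hk)

lemma apply_notMem_prefixSet (j : Fin n) : π j ∉ prefixSet π j := by
  simp [mem_prefixSet]

lemma prefixSet_succ (j : Fin n) : prefixSet π (j + 1) = insert (π j) (prefixSet π j) := by
  ext e
  rw [mem_insert, mem_prefixSet, mem_prefixSet, Nat.lt_succ_iff_lt_or_eq, or_comm,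
    ← Fin.ext_iff, π.symm_apply_eq]

lemma image_filter_le_eq_prefixSet (j : Fin n) :
    (univ.filter (fun t => t ≤ j)).image (fun t => π t) = prefixSet π (j + 1) := by
  simp only [prefixSet, Fin.le_def, Nat.lt_succ_iff]

lemma image_filter_lt_eq_prefixSet (j : Fin n) :
    (univ.filter (fun t => t < j)).image (fun t => π t) = prefixSet π j :=
  rfl

lemma prefixSet_trans_swap_of_le (j : Fin n) {e : E} (he : e ∉ prefixSet π j) {m : ℕ}
    (hm : m ≤ j) : prefixSet (π.trans (Equiv.swap (π j) e)) m = prefixSet π m := by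
  refine image_congr fun t ht => ?_
  have htj : (t : ℕ) < j := (mem_filter.1 ht).2.trans_le hm
  have hmem : π t ∈ prefixSet π j := (mem_prefixSet π).2 (by simpa using htj)
  exact Equiv.swap_apply_of_ne_of_ne (π.injective.ne (Fin.ne_of_lt htj))
    (ne_of_mem_of_not_mem hmem he)

lemma prefixSet_trans_swap_succ (j : Fin n) {e : E} (he : e ∉ prefixSet π j) :
    prefixSet (π.trans (Equiv.swap (π j) e)) (j + 1) = insert e (prefixSet π j) := by
  rw [prefixSet_succ, prefixSet_trans_swap_of_le π j he le_rfl, Equiv.trans_apply,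
    Equiv.swap_apply_left]

end Prefix

section Greedy

variable [DecidableEq E] {f : Finset E → ℝ} {n : ℕ} (π : Fin n ≃ E)

lemma greedy_iff_forall_isTight (hf0 : f ∅ = 0) {x : E → ℝ} :
    (∀ j : Fin n, x (π j) = f (prefixSet π (j + 1)) - f (prefixSet π j)) ↔
      ∀ k ≤ n, IsTight f x (prefixSet π k) := by
  have hstep (j : Fin n) :
      ∑ i ∈ prefixSet π (j + 1), x i = x (π j) + ∑ i ∈ prefixSet π j, x i := by
    rw [prefixSet_succ, sum_insert (apply_notMem_prefixSet π j)]
  constructor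
  · intro hx k hk
    induction k with
    | zero => simp [IsTight, hf0]
    | succ k ih =>
      have hprev := ih (by omega)
      have hxk := hx ⟨k, hk⟩
      have hsum := hstep ⟨k, hk⟩
      unfold IsTight at *
      simp only at hxk hsum
      linarith
  · intro ht j
    have hsucc := ht (j + 1) j.is_lt
    have hprev := ht j j.is_lt.le
    have hsum := hstep j
    unfold IsTight at *
    linarith

variable [Fintype E]

lemma greedy_sum_le (hf0 : f ∅ = 0)
    (hfsub : ∀ A B : Finset E, f (A ∪ B) + f (A ∩ B) ≤ f A + f B) {x : E → ℝ}
    (hx : ∀ j : Fin n, x (π j) = f (prefixSet π (j + 1)) - f (prefixSet π j))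
    (S : Finset E) : ∑ i ∈ S, x i ≤ f S := by
  suffices h : ∀ k ≤ n, ∑ i ∈ S ∩ prefixSet π k, x i ≤ f (S ∩ prefixSet π k) by
    simpa [prefixSet_eq_univ π le_rfl] using h n le_rfl
  intro k hk
  induction k with
  | zero => simp [hf0]
  | succ k ih =>
    have hprev := ih (by omega)
    let j : Fin n := ⟨k, hk⟩
    change ∑ i ∈ S ∩ prefixSet π (j + 1), x i ≤ f (S ∩ prefixSet π (j + 1))
    change ∑ i ∈ S ∩ prefixSet π j, x i ≤ f (S ∩ prefixSet π j) at hprev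
    have hnot := apply_notMem_prefixSet π j
    rw [prefixSet_succ]
    by_cases hjS : π j ∈ S
    · have hgain := insert_sub_le_insert_sub_of_subset hfsub
        (inter_subset_right (s₁ := S) (s₂ := prefixSet π j)) hnot
      rw [← prefixSet_succ, ← hx j] at hgain
      rw [inter_insert_of_mem hjS, sum_insert (fun h => hnot (mem_inter.1 h).2)]
      linarith
    · rwa [inter_insert_of_notMem hjS]

theorem greedy_mem_extremePoints (hf0 : f ∅ = 0)
    (hfmono : ∀ A B : Finset E, A ⊆ B → f A ≤ f B)
    (hfsub : ∀ A B : Finset E, f (A ∪ B) + f (A ∩ B) ≤ f A + f B) {x : E → ℝ}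
    (hx : ∀ j : Fin n, x (π j) = f (prefixSet π (j + 1)) - f (prefixSet π j)) :
    x ∈ (baseB f).extremePoints ℝ := by
  have htight := (greedy_iff_forall_isTight π hf0).1 hx
  have huniv : ∑ i, x i = f univ := by
    simpa [IsTight, prefixSet_eq_univ π le_rfl] using htight n le_rfl
  refine ⟨mem_baseB_of_forall_sum_le hfmono (greedy_sum_le π hf0 hfsub hx) huniv,
    fun y hy z hz hyz => ?_⟩
  have hy' := (greedy_iff_forall_isTight π hf0).2 fun k hk =>
    (htight k hk).of_mem_openSegment hy.1 hz.1 hyz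
  funext i
  obtain ⟨j, rfl⟩ := π.surjective i
  rw [hx j, hy' j]

end Greedy

section Vertex

variable [Fintype E] [DecidableEq E] {f : Finset E → ℝ}

lemma notMem_extremePoints_of_inseparable (hfmono : ∀ A B : Finset E, A ⊆ B → f A ≤ f B)
    {x : E → ℝ} (hx : x ∈ baseB f) {a b : E} (hab : a ≠ b)
    (hsep : ∀ S, IsTight f x S → (a ∈ S ↔ b ∈ S)) : x ∉ (baseB f).extremePoints ℝ := by
  obtain ⟨ε, hε, hslack⟩ := exists_pos_le_slack hx.1
  set w : E → ℝ := Pi.single a 1 - Pi.single b 1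
  have hw (S : Finset E) :
      ∑ i ∈ S, w i = (if a ∈ S then 1 else 0) - if b ∈ S then 1 else 0 := by
    simp [w, sum_sub_distrib, sum_pi_single']
  have hmem (c : ℝ) (hc : |c| ≤ ε) : x + c • w ∈ baseB f := by
    have hsum (S : Finset E) : ∑ i ∈ S, (x + c • w) i = ∑ i ∈ S, x i + c * ∑ i ∈ S, w i := by
      simp [sum_add_distrib, mul_sum]
    refine mem_baseB_of_forall_sum_le hfmono (fun S => ?_) (by rw [hsum, hw]; simp [hx.2])
    rw [hsum, hw]
    by_cases hS : IsTight f x S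
    · rw [if_congr (hsep S hS) rfl rfl, sub_self, mul_zero, add_zero]
      exact hx.1.2 S
    · have hεS := hslack S hS
      have hc' := abs_le.1 hc
      split_ifs <;> nlinarith
  intro hext
  have hεw : ε • w = 0 := by
    have hseg := mem_openSegment_add_sub (𝕜 := ℝ) x (ε • w)
    rw [sub_eq_add_neg, ← neg_smul] at hseg
    simpa using hext.2 (hmem ε (abs_of_pos hε).le) (hmem (-ε) (by simp [abs_of_pos hε])) hseg
  simpa [w, hab, hε.ne'] using congrFun hεw a

lemma exists_insert_isTight (hfmono : ∀ A B : Finset E, A ⊆ B → f A ≤ f B)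
    (hfsub : ∀ A B : Finset E, f (A ∪ B) + f (A ∩ B) ≤ f A + f B) {x : E → ℝ}
    (hx : x ∈ (baseB f).extremePoints ℝ) {T : Finset E} (hT : IsTight f x T)
    (hTu : T ≠ univ) : ∃ e ∉ T, IsTight f x (insert e T) := by
  classical
  have hxB := hx.1
  obtain ⟨U, hU, hUmin⟩ := exists_min_image (univ.filter fun S => IsTight f x S ∧ T ⊂ S) card
    ⟨univ, mem_filter.2 ⟨mem_univ _, hxB.2, ssubset_univ_iff.2 hTu⟩⟩
  simp only [mem_filter, mem_univ, true_and] at hU hUmin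
  obtain ⟨hUt, hTU⟩ := hU
  obtain ⟨a, haU, haT⟩ := exists_of_ssubset hTU
  refine ⟨a, haT, ?_⟩
  suffices insert a T = U by rwa [this]
  by_contra hne
  obtain ⟨b, hbU, hb⟩ := exists_of_ssubset (ssubset_of_subset_of_ne (insert_subset haU hTU.1) hne)
  obtain ⟨hba, hbT⟩ := not_or.1 (mem_insert.not.1 hb)
  -- `(S ∩ U) ∪ T` would be a tight set strictly between `T` and `U`.
  have hsep {c d : E} (hcU : c ∈ U) (hcT : c ∉ T) (hdU : d ∈ U) (hdT : d ∉ T) (S : Finset E)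
      (hS : IsTight f x S) (hcS : c ∈ S) : d ∈ S := by
    by_contra hdS
    have hV := ((hS.union_inter hfsub hxB.1 hUt).2.union_inter hfsub hxB.1 hT).1
    have hTV : T ⊂ S ∩ U ∪ T :=
      ⟨subset_union_right, fun h => hcT (h (mem_union_left _ (mem_inter.2 ⟨hcS, hcU⟩)))⟩
    have hVU : S ∩ U ∪ T ⊂ U := ⟨union_subset inter_subset_right hTU.1, fun h =>
      (mem_union.1 (h hdU)).elim (fun hd => hdS (mem_inter.1 hd).1) hdT⟩
    exact (card_lt_card hVU).not_ge (hUmin _ ⟨hV, hTV⟩)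
  exact notMem_extremePoints_of_inseparable hfmono hxB (Ne.symm hba)
    (fun S hS => ⟨hsep haU haT hbU hbT S hS, hsep hbU hbT haU haT S hS⟩) hx

lemma exists_equiv_forall_isTight (hf0 : f ∅ = 0)
    (hfmono : ∀ A B : Finset E, A ⊆ B → f A ≤ f B)
    (hfsub : ∀ A B : Finset E, f (A ∪ B) + f (A ∩ B) ≤ f A + f B) {x : E → ℝ}
    (hx : x ∈ (baseB f).extremePoints ℝ) {n : ℕ} (hn : Fintype.card E = n) :
    ∃ π : Fin n ≃ E, ∀ k ≤ n, IsTight f x (prefixSet π k) := by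
  suffices h : ∀ k ≤ n, ∃ π : Fin n ≃ E, ∀ m ≤ k, IsTight f x (prefixSet π m) from h n le_rfl
  intro k hk
  induction k with
  | zero =>
    refine ⟨(Fintype.equivFinOfCardEq hn).symm, fun m hm => ?_⟩
    simp [Nat.le_zero.1 hm, IsTight, hf0]
  | succ k ih =>
    obtain ⟨π, hπ⟩ := ih (by omega)
    let j : Fin n := ⟨k, hk⟩
    have hnot := apply_notMem_prefixSet π j
    obtain ⟨e, he, hte⟩ := exists_insert_isTight hfmono hfsub hx (hπ k le_rfl)
      (fun h => hnot (h ▸ mem_univ _))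
    refine ⟨π.trans (Equiv.swap (π j) e), fun m hm => ?_⟩
    rcases Nat.le_succ_iff.1 hm with hm | rfl
    · rw [prefixSet_trans_swap_of_le π j he hm]
      exact hπ m hm
    · rw [prefixSet_trans_swap_succ π j he]
      exact hte

end Vertex

end Polymatroid

open Polymatroid in
/-- the extreme points of the base polytope of a polymatroid
rank function are exactly the greedy vectors over all orderings of the
ground set. -/
theorem stmt_14 {E : Type*} [Fintype E] [DecidableEq E]
    (f : Finset E → ℝ)
    (hf0 : f ∅ = 0)
    (hfmono : ∀ A B : Finset E, A ⊆ B → f A ≤ f B)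
    (hfsub : ∀ A B : Finset E, f (A ∪ B) + f (A ∩ B) ≤ f A + f B)
    (n : ℕ) (hn : Fintype.card E = n) :
    Set.extremePoints ℝ (baseB f) =
      {x : E → ℝ | ∃ π : Fin n ≃ E, ∀ j : Fin n, x (π j) =
        f ((Finset.univ.filter (fun t => t ≤ j)).image (fun t => π t)) -
          f ((Finset.univ.filter (fun t => t < j)).image (fun t => π t))} := by
  ext x
  simp only [Set.mem_ofPred_eq, image_filter_le_eq_prefixSet, image_filter_lt_eq_prefixSet]
  constructor
  · intro hx
    obtain ⟨π, hπ⟩ := exists_equiv_forall_isTight hf0 hfmono hfsub hx hn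
    exact ⟨π, (greedy_iff_forall_isTight π hf0).2 hπ⟩
  · rintro ⟨π, hπ⟩
    exact greedy_mem_extremePoints π hf0 hfmono hfsub hπ
end
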